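/- arXiv:2103.05517 — 13 statements merged into one kernel-verified Lean document; each statement's English description precedes it below -/
import Mathlib

section
/- The functions f_C, f_C' and f_C'' are strictly positive on (0,∞): for all t > 0 one has f_C(t) > 0, f_C'(t) > 0 and f_C''(t) > 0. -/
open Set Filter

noncomputable section

/-- `h` is a smooth solution on `[0,∞)` of the ODE `h' = exp (-h^2/2)` with the
initial value `h 0 = √(-2 log (min λ (1/2)))`.  Derivatives on `[0,∞)` are taken
as derivatives within the set `Ici 0`. -/
def IsH0Sol (lam : ℝ) (h : ℝ → ℝ) : Prop :=
  ContDiffOn ℝ (⊤ : ℕ∞) h (Ici 0) ∧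
  (∀ t ∈ Ici (0:ℝ), derivWithin h (Ici 0) t = Real.exp (-(h t ^ 2) / 2)) ∧
  h 0 = Real.sqrt (-2 * Real.log (min lam (1/2)))

/-- `f` is a smooth solution on `[0,∞)` of the linear ODE
`f'' = C * exp (-h^2) * f` with `f 0 = 1` and `f' 0 = 0`. -/
def IsFCSol (C : ℝ) (h f : ℝ → ℝ) : Prop :=
  ContDiffOn ℝ (⊤ : ℕ∞) f (Ici 0) ∧
  (∀ t ∈ Ici (0:ℝ),
      derivWithin (derivWithin f (Ici 0)) (Ici 0) t
        = C * Real.exp (-(h t ^ 2)) * f t) ∧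
  f 0 = 1 ∧ derivWithin f (Ici 0) 0 = 0

/-- `f_C`, `f_C'` and `f_C''` are strictly positive on `(0,∞)`. -/
theorem stmt_4 (lam : ℝ) (hlam : 0 < lam) (h : ℝ → ℝ) (hh : IsH0Sol lam h)
    (C : ℝ) (hC : 0 < C) (hC' : C < 1) (f : ℝ → ℝ) (hf : IsFCSol C h f) :
    ∀ t ∈ Ioi (0:ℝ),
      0 < f t ∧ 0 < derivWithin f (Ici 0) t ∧
      0 < derivWithin (derivWithin f (Ici 0)) (Ici 0) t := by
  obtain ⟨hfc, hode, hf0, hf'0⟩ := hf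
  set f' := derivWithin f (Ici 0) with hf'def
  set f'' := derivWithin f' (Ici 0) with hf''def
  have hUD : UniqueDiffOn ℝ (Ici (0:ℝ)) := uniqueDiffOn_Ici 0
  have hfcont : ContinuousOn f (Ici 0) := hfc.continuousOn
  have hf'cd : ContDiffOn ℝ (⊤ : ℕ∞) f' (Ici 0) := hfc.derivWithin hUD (by simp)
  have hf'cont : ContinuousOn f' (Ici 0) := hf'cd.continuousOn
  have hderiv_f : ∀ x : ℝ, 0 < x → deriv f x = f' x := fun x hx =>
    (derivWithin_of_mem_nhds (Ici_mem_nhds hx)).symm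
  have hderiv_f' : ∀ x : ℝ, 0 < x → deriv f' x = f'' x := fun x hx =>
    (derivWithin_of_mem_nhds (Ici_mem_nhds hx)).symm
  have key2 : ∀ b : ℝ, 0 < b → (∀ s, 0 ≤ s → s < b → 0 < f s) →
      ∀ t, 0 < t → t ≤ b → 0 < f' t := by
    intro b hb hpos t ht htb
    have hmono : StrictMonoOn f' (Icc 0 b) := by
      apply strictMonoOn_of_deriv_pos (convex_Icc 0 b) (hf'cont.mono Icc_subset_Ici_self)
      intro x hx
      rw [interior_Icc] at hx
      rw [hderiv_f' x hx.1, hode x hx.1.le]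
      exact mul_pos (mul_pos hC (Real.exp_pos _)) (hpos x hx.1.le hx.2)
    have := hmono (left_mem_Icc.mpr hb.le) ⟨ht.le, htb⟩ ht
    rw [hf'0] at this
    exact this
  have keyf : ∀ b : ℝ, 0 < b → (∀ s, 0 ≤ s → s < b → 0 < f s) → 0 < f b := by
    intro b hb hpos
    have hmono : StrictMonoOn f (Icc 0 b) := by
      apply strictMonoOn_of_deriv_pos (convex_Icc 0 b) (hfcont.mono Icc_subset_Ici_self)
      intro x hx
      rw [interior_Icc] at hx
      rw [hderiv_f x hx.1]
      exact key2 b hb hpos x hx.1 hx.2.le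
    have := hmono (left_mem_Icc.mpr hb.le) (right_mem_Icc.mpr hb.le) hb
    rw [hf0] at this
    linarith
  have hfpos : ∀ t : ℝ, 0 ≤ t → 0 < f t := by
    by_contra hcon
    push_neg at hcon
    obtain ⟨t₁, ht₁, hft₁⟩ := hcon
    set S := (Ici (0:ℝ)) ∩ f ⁻¹' (Iic 0) with hS
    have hSne : S.Nonempty := ⟨t₁, ht₁, hft₁⟩
    have hSc : IsClosed S := hfcont.preimage_isClosed_of_isClosed isClosed_Ici isClosed_Iic
    have hbdd : BddBelow S := ⟨0, fun x hx => hx.1⟩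
    set t₀ := sInf S with ht₀def
    have ht₀S : t₀ ∈ S := hSc.csInf_mem hSne hbdd
    have hft₀ : f t₀ ≤ 0 := ht₀S.2
    have ht₀pos : 0 < t₀ := by
      rcases lt_or_eq_of_le (mem_Ici.mp ht₀S.1) with h' | h'
      · exact h'
      · exfalso; rw [← h', hf0] at hft₀; linarith
    have hpos : ∀ s, 0 ≤ s → s < t₀ → 0 < f s := by
      intro s hs hst
      by_contra hns
      push_neg at hns
      have : t₀ ≤ s := csInf_le hbdd ⟨hs, hns⟩
      linarith
    have := keyf t₀ ht₀pos hpos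
    linarith
  intro t ht
  simp only [mem_Ioi] at ht
  refine ⟨hfpos t ht.le, ?_, ?_⟩
  · exact key2 t ht (fun s hs _ => hfpos s hs) t ht le_rfl
  · rw [hode t ht.le]
    exact mul_pos (mul_pos hC (Real.exp_pos _)) (hfpos t ht.le)
end
end

section
/- The function f_C tends to infinity: lim_{t→∞} f_C(t) = ∞. -/
open Set Filter

noncomputable section

/-- `f_C(t) → ∞` as `t → ∞`. -/
theorem stmt_5 (lam : ℝ) (hlam : 0 < lam) (h : ℝ → ℝ) (hh : IsH0Sol lam h)
    (C : ℝ) (hC : 0 < C) (hC' : C < 1) (f : ℝ → ℝ) (hf : IsFCSol C h f) :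
    Tendsto f atTop atTop := by
  obtain ⟨hfs, hf'', hf0, hf'0⟩ := hf
  set q : ℝ → ℝ := fun t => C * Real.exp (-(h t ^ 2)) with hq
  have hqpos : ∀ t, 0 < q t := fun t => mul_pos hC (Real.exp_pos _)
  set f' : ℝ → ℝ := derivWithin f (Ici 0) with hf'def
  have hUD : UniqueDiffOn ℝ (Ici (0:ℝ)) := uniqueDiffOn_Ici 0
  have hfd : DifferentiableOn ℝ f (Ici 0) := hfs.differentiableOn (by simp)
  have hf'cd : ContDiffOn ℝ (⊤ : ℕ∞) f' (Ici 0) := hfs.derivWithin hUD (by simp)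
  have hf'd : DifferentiableOn ℝ f' (Ici 0) := hf'cd.differentiableOn (by simp)
  have hder_f : ∀ t ∈ Ici (0:ℝ), HasDerivWithinAt f (f' t) (Ici 0) t :=
    fun t ht => (hfd t ht).hasDerivWithinAt
  have hder_f' : ∀ t ∈ Ici (0:ℝ), HasDerivWithinAt f' (q t * f t) (Ici 0) t := by
    intro t ht
    have := (hf'd t ht).hasDerivWithinAt
    rwa [show derivWithin f' (Ici 0) t = q t * f t from hf'' t ht] at this
  have hfc : ContinuousOn f (Ici 0) := hfs.continuousOn
  have hf'c : ContinuousOn f' (Ici 0) := hf'cd.continuousOn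
  have hIoi : interior (Ici (0:ℝ)) = Ioi 0 := interior_Ici
  -- w = f * f' is nonneg on Ici 0
  have hw_mono : MonotoneOn (fun t => f t * f' t) (Ici 0) := by
    apply monotoneOn_of_hasDerivWithinAt_nonneg (convex_Ici 0)
      (hfc.mul hf'c)
      (f' := fun t => f' t * f' t + f t * (q t * f t))
    · intro x hx
      rw [hIoi] at hx
      exact (((hder_f x (mem_Ici.2 (le_of_lt hx))).mul (hder_f' x (mem_Ici.2 (le_of_lt hx)))).mono
        (by rw [hIoi]; exact Ioi_subset_Ici_self))
    · intro x hx
      have := hqpos x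
      nlinarith [sq_nonneg (f' x), sq_nonneg (f x)]
  have hw0 : f 0 * f' 0 = 0 := by rw [hf0, hf'0]; ring
  have hw_nonneg : ∀ t ∈ Ici (0:ℝ), 0 ≤ f t * f' t := by
    intro t ht
    have := hw_mono (self_mem_Ici) ht ht
    simp only at this
    rw [hw0] at this; exact this
  -- f^2 is monotone, hence f*f ≥ 1
  have hsq_mono : MonotoneOn (fun t => f t * f t) (Ici 0) := by
    apply monotoneOn_of_hasDerivWithinAt_nonneg (convex_Ici 0)
      (hfc.mul hfc)
      (f' := fun t => f' t * f t + f t * f' t)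
    · intro x hx
      rw [hIoi] at hx
      exact (((hder_f x (mem_Ici.2 (le_of_lt hx))).mul (hder_f x (mem_Ici.2 (le_of_lt hx)))).mono
        (by rw [hIoi]; exact Ioi_subset_Ici_self))
    · intro x hx
      rw [hIoi] at hx
      have := hw_nonneg x (mem_Ici.2 (le_of_lt hx))
      nlinarith
  have hsq1 : ∀ t ∈ Ici (0:ℝ), 1 ≤ f t * f t := by
    intro t ht
    have := hsq_mono (self_mem_Ici) ht ht
    simp only at this
    rw [hf0] at this; nlinarith
  -- f ≥ 1 on Ici 0 by IVT
  have hf1 : ∀ t ∈ Ici (0:ℝ), 1 ≤ f t := by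
    intro t ht
    by_contra hlt
    push_neg at hlt
    have hneg : f t ≤ -1 := by nlinarith [hsq1 t ht]
    have : (0:ℝ) ∈ Icc (f t) (f 0) := ⟨by linarith, by rw [hf0]; norm_num⟩
    obtain ⟨s, hs, hfs0⟩ := intermediate_value_Icc' ht (hfc.mono (Icc_subset_Ici_self)) this
    have := hsq1 s hs.1
    rw [hfs0] at this; norm_num at this
  -- f' ≥ 0 on Ici 0
  have hf'nonneg : ∀ t ∈ Ici (0:ℝ), 0 ≤ f' t := by
    intro t ht
    have h1 := hw_nonneg t ht
    have h2 := hf1 t ht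
    nlinarith
  -- minimum of q on [0,1]
  have hhcont : ContinuousOn h (Ici 0) := hh.1.continuousOn
  have hqcont : ContinuousOn q (Icc (0:ℝ) 1) := by
    apply ContinuousOn.mul continuousOn_const
    exact Real.continuous_exp.comp_continuousOn
      (((hhcont.mono Icc_subset_Ici_self).pow 2).neg)
  obtain ⟨x₀, hx₀, hminOn⟩ := isCompact_Icc.exists_isMinOn (nonempty_Icc.2 zero_le_one) hqcont
  set m : ℝ := q x₀ with hm
  have hmpos : 0 < m := hqpos x₀
  have hqm : ∀ t ∈ Icc (0:ℝ) 1, m ≤ q t := fun t ht => hminOn ht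
  -- φ = f' - m*t monotone on [0,1], so f' 1 ≥ m
  have hφ : MonotoneOn (fun t => f' t - m * t) (Icc 0 1) := by
    apply monotoneOn_of_hasDerivWithinAt_nonneg (convex_Icc 0 1)
      ((hf'c.mono Icc_subset_Ici_self).sub (continuousOn_const.mul continuousOn_id))
      (f' := fun t => q t * f t - m)
    · intro x hx
      have hsub2 : interior (Icc (0:ℝ) 1) ⊆ Ici 0 := by
        rw [interior_Icc]; exact fun y hy => le_of_lt hy.1
      rw [interior_Icc] at hx
      have hx0 : x ∈ Ici (0:ℝ) := le_of_lt hx.1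
      have := ((hder_f' x hx0).sub ((hasDerivWithinAt_id x _).const_mul m)).mono hsub2
      simp only [id, mul_one] at this; exact this
    · intro x hx
      rw [interior_Icc] at hx
      have h1 := hqm x ⟨le_of_lt hx.1, le_of_lt hx.2⟩
      have h2 := hf1 x (le_of_lt hx.1)
      have h3 := hqpos x
      nlinarith
  have hf'1 : m ≤ f' 1 := by
    have := hφ (by norm_num : (0:ℝ) ∈ Icc (0:ℝ) 1) (by norm_num : (1:ℝ) ∈ Icc (0:ℝ) 1)
      zero_le_one
    simp only [hf'0, mul_zero, mul_one, sub_zero] at this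
    linarith
  -- f' monotone on Ici 0
  have hf'mono : MonotoneOn f' (Ici 0) := by
    apply monotoneOn_of_hasDerivWithinAt_nonneg (convex_Ici 0) hf'c
      (f' := fun t => q t * f t)
    · intro x hx
      rw [hIoi] at hx
      exact (hder_f' x (mem_Ici.2 (le_of_lt hx))).mono (by rw [hIoi]; exact Ioi_subset_Ici_self)
    · intro x hx
      rw [hIoi] at hx
      have := hf1 x (mem_Ici.2 (le_of_lt hx))
      have := hqpos x
      nlinarith
  -- ψ = f - m*t monotone on Ici 1
  have hψ : MonotoneOn (fun t => f t - m * t) (Ici 1) := by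
    have hsub : Ici (1:ℝ) ⊆ Ici 0 := Ici_subset_Ici.2 zero_le_one
    apply monotoneOn_of_hasDerivWithinAt_nonneg (convex_Ici 1)
      ((hfc.mono hsub).sub (continuousOn_const.mul continuousOn_id))
      (f' := fun t => f' t - m)
    · intro x hx
      have hsub2 : interior (Ici (1:ℝ)) ⊆ Ici 0 := by
        rw [interior_Ici]; exact fun y hy => mem_Ici.2 (le_trans zero_le_one (le_of_lt hy))
      rw [interior_Ici] at hx
      have hx0 : x ∈ Ici (0:ℝ) := mem_Ici.2 (le_trans zero_le_one (le_of_lt hx))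
      have := ((hder_f x hx0).sub ((hasDerivWithinAt_id x _).const_mul m)).mono hsub2
      simp only [id, mul_one] at this; exact this
    · intro x hx
      rw [interior_Ici] at hx
      have : f' 1 ≤ f' x := hf'mono (by norm_num) (mem_Ici.2 (le_trans zero_le_one (le_of_lt hx)))
        (le_of_lt hx)
      linarith
  -- conclude
  have hlin : ∀ t : ℝ, 1 ≤ t → m * t + (f 1 - m) ≤ f t := by
    intro t ht
    have := hψ (self_mem_Ici) (mem_Ici.2 ht) ht
    simp only [mul_one] at this
    linarith
  apply tendsto_atTop_mono' atTop (Eventually.mono (eventually_ge_atTop 1)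
    (fun t ht => hlin t ht))
  exact tendsto_atTop_add_const_right _ _ (tendsto_id.const_mul_atTop hmpos)
end
end

section
/- The derivative of f_C tends to infinity: lim_{t→∞} f_C'(t) = ∞. -/
open Set Filter

noncomputable section

set_option maxHeartbeats 1000000 in
/-- `f_C'(t) → ∞` as `t → ∞`. -/
theorem stmt_6 (lam : ℝ) (hlam : 0 < lam) (h : ℝ → ℝ) (hh : IsH0Sol lam h)
    (C : ℝ) (hC : 0 < C) (hC' : C < 1) (f : ℝ → ℝ) (hf : IsFCSol C h f) :
    Tendsto (derivWithin f (Ici 0)) atTop atTop := by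
  obtain ⟨hfs, hfode, hf0, hf'0⟩ := hf
  obtain ⟨hhs, hhode, hh0'⟩ := hh
  set g := derivWithin f (Ici (0:ℝ)) with hg_def
  have huniq : UniqueDiffOn ℝ (Ici (0:ℝ)) := uniqueDiffOn_Ici 0
  have hg_smooth : ContDiffOn ℝ 1 g (Ici 0) := hfs.derivWithin huniq (WithTop.coe_le_coe.mpr le_top)
  have hf_diff : DifferentiableOn ℝ f (Ici 0) := hfs.differentiableOn (by simp)
  have hg_diff : DifferentiableOn ℝ g (Ici 0) := hg_smooth.differentiableOn one_ne_zero
  have hh_diff : DifferentiableOn ℝ h (Ici 0) := hhs.differentiableOn (by simp)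
  have hf_cont : ContinuousOn f (Ici 0) := hf_diff.continuousOn
  have hg_cont : ContinuousOn g (Ici 0) := hg_smooth.continuousOn
  have hh_cont : ContinuousOn h (Ici 0) := hh_diff.continuousOn
  -- pointwise derivatives at interior points
  have hfd : ∀ x : ℝ, 0 < x → HasDerivAt f (g x) x := by
    intro x hx
    have hd : DifferentiableAt ℝ f x :=
      (hf_diff x (le_of_lt hx)).differentiableAt (Ici_mem_nhds hx)
    have := hd.hasDerivAt
    rwa [show deriv f x = g x from (derivWithin_of_mem_nhds (Ici_mem_nhds hx)).symm] at this
  have hgd : ∀ x : ℝ, 0 < x → HasDerivAt g (C * Real.exp (-(h x ^ 2)) * f x) x := by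
    intro x hx
    have hd : DifferentiableAt ℝ g x :=
      (hg_diff x (le_of_lt hx)).differentiableAt (Ici_mem_nhds hx)
    have := hd.hasDerivAt
    rwa [show deriv g x = C * Real.exp (-(h x ^ 2)) * f x from by
      rw [← derivWithin_of_mem_nhds (Ici_mem_nhds hx)]
      exact hfode x (le_of_lt hx)] at this
  have hhd : ∀ x : ℝ, 0 < x → HasDerivAt h (Real.exp (-(h x ^ 2) / 2)) x := by
    intro x hx
    have hd : DifferentiableAt ℝ h x :=
      (hh_diff x (le_of_lt hx)).differentiableAt (Ici_mem_nhds hx)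
    have := hd.hasDerivAt
    rwa [show deriv h x = Real.exp (-(h x ^ 2) / 2) from by
      rw [← derivWithin_of_mem_nhds (Ici_mem_nhds hx)]
      exact hhode x (le_of_lt hx)] at this
  -- h is nondecreasing and nonnegative
  have hh_mono : MonotoneOn h (Ici 0) := by
    apply monotoneOn_of_deriv_nonneg (convex_Ici 0) hh_cont
    · intro x hx
      rw [interior_Ici] at hx
      exact ((hhd x hx).differentiableAt).differentiableWithinAt
    · intro x hx
      rw [interior_Ici] at hx
      rw [(hhd x hx).deriv]
      positivity
  have hh0nn : 0 ≤ h 0 := by rw [hh0']; exact Real.sqrt_nonneg _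
  have hhnn : ∀ t : ℝ, 0 ≤ t → 0 ≤ h t := fun t ht =>
    hh0nn.trans (hh_mono self_mem_Ici ht ht)
  -- f ≥ 1 on [0, ∞)
  have key_mono : ∀ b : ℝ, 0 ≤ b → (∀ x ∈ Ioo (0:ℝ) b, 0 ≤ f x) → 1 ≤ f b := by
    intro b hb hpos
    have hIcc : Icc (0:ℝ) b ⊆ Ici 0 := fun x hx => hx.1
    have hg_mono' : MonotoneOn g (Icc 0 b) := by
      apply monotoneOn_of_deriv_nonneg (convex_Icc 0 b) (hg_cont.mono hIcc)
      · intro x hx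
        rw [interior_Icc] at hx
        exact ((hgd x hx.1).differentiableAt).differentiableWithinAt
      · intro x hx
        rw [interior_Icc] at hx
        rw [(hgd x hx.1).deriv]
        have hfx := hpos x hx
        positivity
    have hg_nonneg : ∀ x ∈ Icc (0:ℝ) b, 0 ≤ g x := by
      intro x hx
      have := hg_mono' (left_mem_Icc.mpr hb) hx hx.1
      rwa [hf'0] at this
    have hf_mono : MonotoneOn f (Icc 0 b) := by
      apply monotoneOn_of_deriv_nonneg (convex_Icc 0 b) (hf_cont.mono hIcc)
      · intro x hx
        rw [interior_Icc] at hx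
        exact ((hfd x hx.1).differentiableAt).differentiableWithinAt
      · intro x hx
        rw [interior_Icc] at hx
        rw [(hfd x hx.1).deriv]
        exact hg_nonneg x ⟨hx.1.le, hx.2.le⟩
    have := hf_mono (left_mem_Icc.mpr hb) (right_mem_Icc.mpr hb) hb
    rwa [hf0] at this
  have hf_ge1 : ∀ t : ℝ, 0 ≤ t → 1 ≤ f t := by
    intro t ht
    by_contra hlt
    push_neg at hlt
    set S : Set ℝ := (Icc 0 t ∩ f ⁻¹' (Iic 0)) ∪ {t} with hS_def
    have hScl : IsClosed S :=
      (((hf_cont.mono (fun x hx => hx.1)).preimage_isClosed_of_isClosed isClosed_Icc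
        isClosed_Iic)).union isClosed_singleton
    have hne : S.Nonempty := ⟨t, Or.inr rfl⟩
    have hbdd : BddBelow S := ⟨0, by
      rintro x (hx | hx)
      · exact hx.1.1
      · rw [mem_singleton_iff] at hx; rw [hx]; exact ht⟩
    set s := sInf S with hs_def
    have hsS : s ∈ S := hScl.csInf_mem hne hbdd
    have hs_nonneg : 0 ≤ s := by
      rcases hsS with hx | hx
      · exact hx.1.1
      · rw [mem_singleton_iff] at hx; rw [hx]; exact ht
    have hs_le : s ≤ t := csInf_le hbdd (Or.inr rfl)
    have hpos : ∀ x ∈ Ioo (0:ℝ) s, 0 ≤ f x := by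
      intro x hx
      by_contra hneg
      push_neg at hneg
      have hxS : x ∈ S := Or.inl ⟨⟨hx.1.le, hx.2.le.trans hs_le⟩, hneg.le⟩
      have : s ≤ x := csInf_le hbdd hxS
      linarith [hx.2]
    have h1s : 1 ≤ f s := key_mono s hs_nonneg hpos
    rcases hsS with hx | hx
    · have : f s ≤ 0 := hx.2
      linarith
    · rw [mem_singleton_iff] at hx
      rw [hx] at h1s
      linarith
  -- g is nondecreasing on [0, ∞)
  have hg_mono : MonotoneOn g (Ici 0) := by
    apply monotoneOn_of_deriv_nonneg (convex_Ici 0) hg_cont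
    · intro x hx
      rw [interior_Ici] at hx
      exact ((hgd x hx).differentiableAt).differentiableWithinAt
    · intro x hx
      rw [interior_Ici] at hx
      rw [(hgd x hx).deriv]
      have hfx : (0:ℝ) < f x := lt_of_lt_of_le one_pos (hf_ge1 x hx.le)
      positivity
  -- ε := g 1 > 0
  have hg1 : 0 < g 1 := by
    have hsm : StrictMonoOn g (Icc (0:ℝ) 1) := by
      apply strictMonoOn_of_deriv_pos (convex_Icc 0 1)
        (hg_cont.mono (fun x hx => hx.1))
      intro x hx
      rw [interior_Icc] at hx
      rw [(hgd x hx.1).deriv]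
      have hfx : (0:ℝ) < f x := lt_of_lt_of_le one_pos (hf_ge1 x hx.1.le)
      positivity
    have := hsm ⟨le_refl (0:ℝ), zero_le_one⟩ ⟨zero_le_one, le_refl (1:ℝ)⟩ one_pos
    rwa [hf'0] at this
  set ε := g 1 with hε_def
  -- linear lower bound for f
  have hflin : ∀ t : ℝ, 1 ≤ t → 1 + ε * (t - 1) ≤ f t := by
    have hmono : MonotoneOn (fun t => f t - ε * t) (Ici 1) := by
      apply monotoneOn_of_deriv_nonneg (convex_Ici 1)
      · exact (hf_cont.mono (Ici_subset_Ici.mpr zero_le_one)).sub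
          ((continuous_const.mul continuous_id).continuousOn)
      · intro x hx
        rw [interior_Ici] at hx
        have hd : HasDerivAt (fun t => f t - ε * t) (g x - ε) x := by
          have := (hfd x (lt_trans one_pos hx)).fun_sub ((hasDerivAt_id' x).const_mul ε)
          simpa using this
        exact hd.differentiableAt.differentiableWithinAt
      · intro x hx
        rw [interior_Ici] at hx
        have hd : HasDerivAt (fun t => f t - ε * t) (g x - ε) x := by
          have := (hfd x (lt_trans one_pos hx)).fun_sub ((hasDerivAt_id' x).const_mul ε)
          simpa using this
        rw [hd.deriv]
        have hx1 : (1:ℝ) < x := hx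
        have : ε ≤ g x := hg_mono (by norm_num) (by
          simp only [mem_Ici]; linarith) hx1.le
        linarith
    intro t ht
    have h2 := hmono self_mem_Ici ht ht
    simp only at h2
    have h3 : 1 ≤ f 1 := hf_ge1 1 zero_le_one
    nlinarith
  -- the key differential inequality for exp(h^2/2)
  set A := Real.exp (h 0 ^ 2 / 2) with hA_def
  have hA1 : 1 ≤ A := by
    rw [hA_def]
    have : (0:ℝ) ≤ h 0 ^ 2 / 2 := by positivity
    calc (1:ℝ) = Real.exp 0 := Real.exp_zero.symm
      _ ≤ A := Real.exp_le_exp.mpr this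
  have hψ : ∀ t : ℝ, 0 ≤ t → Real.exp (h t ^ 2 / 2) ≤ A + t * h t := by
    have hψd : ∀ x : ℝ, 0 < x →
        HasDerivAt (fun t => Real.exp (h t ^ 2 / 2) - t * h t)
          (-(x * Real.exp (-(h x ^ 2) / 2))) x := by
      intro x hx
      have hd := hhd x hx
      have h1 : HasDerivAt (fun t => h t ^ 2 / 2) (h x * Real.exp (-(h x ^ 2) / 2)) x := by
        have := (hd.fun_pow 2).div_const 2
        refine this.congr_deriv ?_
        ring
      have h2 := h1.exp
      have h3 : HasDerivAt (fun t => t * h t)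
          (1 * h x + x * Real.exp (-(h x ^ 2) / 2)) x := (hasDerivAt_id' x).mul hd
      have h4 := h2.fun_sub h3
      refine h4.congr_deriv ?_
      have hexp : Real.exp (h x ^ 2 / 2) * Real.exp (-(h x ^ 2) / 2) = 1 := by
        rw [← Real.exp_add, show h x ^ 2 / 2 + -(h x ^ 2) / 2 = 0 by ring, Real.exp_zero]
      have h5 : Real.exp (h x ^ 2 / 2) * (h x * Real.exp (-(h x ^ 2) / 2)) = h x := by
        rw [mul_comm (h x), ← mul_assoc, hexp, one_mul]
      rw [h5]
      ring
    have hanti : AntitoneOn (fun t => Real.exp (h t ^ 2 / 2) - t * h t) (Ici 0) := by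
      apply antitoneOn_of_deriv_nonpos (convex_Ici 0)
      · exact (Real.continuous_exp.comp_continuousOn
          ((hh_cont.pow 2).div_const 2)).sub (continuousOn_id.mul hh_cont)
      · intro x hx
        rw [interior_Ici] at hx
        exact ((hψd x hx).differentiableAt).differentiableWithinAt
      · intro x hx
        rw [interior_Ici] at hx
        rw [(hψd x hx).deriv]
        have hx' : (0:ℝ) < x := hx
        have he := Real.exp_pos (-(h x ^ 2) / 2)
        nlinarith [mul_pos hx' he]
    intro t ht
    have := hanti self_mem_Ici ht ht
    simp only [zero_mul, sub_zero] at this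
    linarith
  -- h t ≤ h 0 + t
  have hhlin : ∀ t : ℝ, 0 ≤ t → h t ≤ h 0 + t := by
    have hanti : AntitoneOn (fun t => h t - t) (Ici 0) := by
      apply antitoneOn_of_deriv_nonpos (convex_Ici 0)
      · exact hh_cont.sub continuousOn_id
      · intro x hx
        rw [interior_Ici] at hx
        exact (((hhd x hx).sub (hasDerivAt_id' x)).differentiableAt).differentiableWithinAt
      · intro x hx
        rw [interior_Ici] at hx
        rw [((hhd x hx).fun_sub (hasDerivAt_id' x)).deriv]
        have : Real.exp (-(h x ^ 2) / 2) ≤ 1 := by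
          apply Real.exp_le_one_iff.mpr
          have := sq_nonneg (h x)
          linarith
        linarith
    intro t ht
    have := hanti self_mem_Ici ht ht
    simp only [sub_zero] at this
    linarith
  -- constants
  set M := max (max A (h 0)) 1 with hM_def
  have hM1 : 1 ≤ M := le_max_right _ _
  have hMA : A ≤ M := le_trans (le_max_left _ _) (le_max_left _ _)
  have hMh0 : h 0 ≤ M := le_trans (le_max_right _ _) (le_max_left _ _)
  set T₀ := max (3 * M) 3 with hT₀_def
  have hT₀3 : 3 ≤ T₀ := le_max_right _ _
  have hT₀M : 3 * M ≤ T₀ := le_max_left _ _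
  have hT₀pos : 0 < T₀ := by linarith
  -- the key lower bound for deriv g
  have key : ∀ t : ℝ, T₀ ≤ t →
      C * ε / 48 * ((Real.log t)⁻¹ * t⁻¹) ≤ C * Real.exp (-(h t ^ 2)) * f t := by
    intro t ht
    have ht3 : 3 ≤ t := le_trans hT₀3 ht
    have ht0 : 0 < t := by linarith
    have htM : 3 * M ≤ t := le_trans hT₀M ht
    have hAt' : A ≤ t := by nlinarith
    have hh0t : h 0 ≤ t := by nlinarith
    have hlogt : 1 ≤ Real.log t := by
      rw [← Real.log_exp 1]
      apply Real.log_le_log (Real.exp_pos 1)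
      have := Real.exp_one_lt_d9
      linarith
    have hht : h t ≤ h 0 + t := hhlin t ht0.le
    have hhtnn : 0 ≤ h t := hhnn t ht0.le
    have hAt : A + t * h t ≤ t ^ 3 := by
      nlinarith [mul_le_mul_of_nonneg_left hht ht0.le,
        mul_le_mul_of_nonneg_left hh0t ht0.le,
        mul_nonneg (mul_nonneg ht0.le ht0.le) (show (0:ℝ) ≤ t - 3 by linarith),
        mul_nonneg ht0.le (show (0:ℝ) ≤ t - 1 by linarith)]
    have hexp_le : Real.exp (h t ^ 2 / 2) ≤ A + t * h t := hψ t ht0.le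
    have hAt_pos : 0 < A + t * h t := lt_of_lt_of_le (Real.exp_pos _) hexp_le
    have hsq : h t ^ 2 ≤ 6 * Real.log t := by
      have h1 : h t ^ 2 / 2 ≤ Real.log (A + t * h t) := by
        rw [← Real.log_exp (h t ^ 2 / 2)]
        exact Real.log_le_log (Real.exp_pos _) hexp_le
      have h2 : Real.log (A + t * h t) ≤ Real.log (t ^ 3) :=
        Real.log_le_log hAt_pos hAt
      rw [Real.log_pow] at h2
      push_cast at h2
      linarith
    have hht2 : h t ≤ Real.sqrt (6 * Real.log t) := by
      rw [show h t = Real.sqrt (h t ^ 2) from (Real.sqrt_sq hhtnn).symm]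
      exact Real.sqrt_le_sqrt hsq
    have hsq6 : 1 ≤ Real.sqrt (6 * Real.log t) := by
      rw [show (1:ℝ) = Real.sqrt 1 from (Real.sqrt_one).symm]
      exact Real.sqrt_le_sqrt (by linarith)
    have hs6 : Real.sqrt (6 * Real.log t) ^ 2 = 6 * Real.log t :=
      Real.sq_sqrt (by linarith)
    have hDb : A + t * h t ≤ 2 * t * Real.sqrt (6 * Real.log t) := by
      have e2 := mul_le_mul_of_nonneg_left hht2 ht0.le
      have e3 := mul_le_mul_of_nonneg_left hsq6 ht0.le
      nlinarith
    have hDsq : (A + t * h t) ^ 2 ≤ 24 * (t ^ 2 * Real.log t) := by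
      have h7 : (2 * t * Real.sqrt (6 * Real.log t)) ^ 2 = 24 * (t ^ 2 * Real.log t) := by
        rw [mul_pow, mul_pow, hs6]
        ring
      have h8 := pow_le_pow_left₀ hAt_pos.le hDb 2
      linarith
    have hexp_ge : ((A + t * h t) ^ 2)⁻¹ ≤ Real.exp (-(h t ^ 2)) := by
      have hsq' : Real.exp (h t ^ 2 / 2) ^ 2 = Real.exp (h t ^ 2) := by
        rw [pow_two, ← Real.exp_add]
        congr 1
        ring
      rw [Real.exp_neg]
      rw [← hsq']
      apply inv_anti₀ (by positivity)
      exact pow_le_pow_left₀ (Real.exp_pos _).le hexp_le 2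
    have e1 : (24 * (t ^ 2 * Real.log t))⁻¹ ≤ Real.exp (-(h t ^ 2)) :=
      le_trans (inv_anti₀ (by positivity) hDsq) hexp_ge
    have hfge : ε * t / 2 ≤ f t := by
      have := hflin t (by linarith)
      nlinarith [hg1]
    calc C * ε / 48 * ((Real.log t)⁻¹ * t⁻¹)
        = C * (24 * (t ^ 2 * Real.log t))⁻¹ * (ε * t / 2) := by
          field_simp
          try ring
      _ ≤ C * Real.exp (-(h t ^ 2)) * f t := by
          apply mul_le_mul
          · exact mul_le_mul_of_nonneg_left e1 hC.le
          · exact hfge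
          · positivity
          · positivity
  -- comparison with c * log (log t)
  set c := C * ε / 48 with hc_def
  have hc_pos : 0 < c := by positivity
  set Φ : ℝ → ℝ := fun t => c * Real.log (Real.log t) with hΦ_def
  have hΦd : ∀ x : ℝ, 3 ≤ x → HasDerivAt Φ (c * ((Real.log x)⁻¹ * x⁻¹)) x := by
    intro x hx
    have hx0 : 0 < x := by linarith
    have hlog1 : 1 ≤ Real.log x := by
      rw [← Real.log_exp 1]
      apply Real.log_le_log (Real.exp_pos 1)
      have := Real.exp_one_lt_d9
      linarith
    have h1 : HasDerivAt Real.log x⁻¹ x := Real.hasDerivAt_log (ne_of_gt hx0)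
    have h2 : HasDerivAt Real.log (Real.log x)⁻¹ (Real.log x) :=
      Real.hasDerivAt_log (by linarith)
    have h3 := (h2.comp x h1).const_mul c
    exact h3
  have hW : MonotoneOn (fun t => g t - Φ t) (Ici T₀) := by
    apply monotoneOn_of_deriv_nonneg (convex_Ici T₀)
    · apply ContinuousOn.sub
      · exact hg_cont.mono (Ici_subset_Ici.mpr hT₀pos.le)
      · intro x hx
        exact ((hΦd x (le_trans hT₀3 hx)).differentiableAt).continuousAt.continuousWithinAt
    · intro x hx
      rw [interior_Ici] at hx
      have hx3 : 3 ≤ x := le_trans hT₀3 hx.le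
      exact (((hgd x (by linarith)).sub (hΦd x hx3)).differentiableAt).differentiableWithinAt
    · intro x hx
      rw [interior_Ici] at hx
      have hx3 : 3 ≤ x := le_trans hT₀3 hx.le
      rw [((hgd x (by linarith)).fun_sub (hΦd x hx3)).deriv]
      have := key x hx.le
      linarith
  have hfin : ∀ t : ℝ, T₀ ≤ t → g T₀ - Φ T₀ + Φ t ≤ g t := by
    intro t ht
    have := hW self_mem_Ici ht ht
    simp only at this
    linarith
  have hΦtend : Tendsto Φ atTop atTop :=
    (Real.tendsto_log_atTop.comp Real.tendsto_log_atTop).const_mul_atTop hc_pos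
  have hsum : Tendsto (fun t => g T₀ - Φ T₀ + Φ t) atTop atTop :=
    tendsto_atTop_add_const_left _ _ hΦtend
  exact tendsto_atTop_mono' atTop (eventually_atTop.mpr ⟨T₀, hfin⟩) hsum
end
end

section
/- The product f_C·h₀' tends to zero: lim_{t→∞} f_C(t)·h₀'(t) = 0, i.e. lim_{t→∞} f_C(t)·exp(−h₀(t)²/2) = 0. -/
open Set Filter

noncomputable section

set_option maxHeartbeats 1000000 in
/-- `f_C(t) · h₀'(t) → 0` as `t → ∞`, i.e. `f_C(t) · exp (-h₀(t)^2/2) → 0`. -/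
theorem stmt_7 (lam : ℝ) (hlam : 0 < lam) (h : ℝ → ℝ) (hh : IsH0Sol lam h)
    (C : ℝ) (hC : 0 < C) (hC' : C < 1) (f : ℝ → ℝ) (hf : IsFCSol C h f) :
    Tendsto (fun t => f t * derivWithin h (Ici 0) t) atTop (nhds 0) ∧
    Tendsto (fun t => f t * Real.exp (-(h t ^ 2) / 2)) atTop (nhds 0) := by
  obtain ⟨hsm, hde, h0eq⟩ := hh
  obtain ⟨fsm, fde, f0, f'0⟩ := hf
  have hU : UniqueDiffOn ℝ (Ici (0:ℝ)) := uniqueDiffOn_Ici 0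
  set Df := derivWithin f (Ici 0) with hDf
  have hDfsm : ContDiffOn ℝ (⊤ : ℕ∞) Df (Ici 0) := fsm.derivWithin hU (by simp)
  -- basic exp identities
  have key : ∀ x : ℝ, Real.exp (-(x ^ 2) / 2) * Real.exp (x ^ 2 / 2) = 1 := by
    intro x
    rw [← Real.exp_add, show -(x ^ 2) / 2 + x ^ 2 / 2 = 0 by ring, Real.exp_zero]
  have e2 : ∀ x : ℝ, Real.exp (-(x ^ 2)) = Real.exp (-(x ^ 2) / 2) * Real.exp (-(x ^ 2) / 2) := by
    intro x
    rw [← Real.exp_add, show -(x ^ 2) / 2 + -(x ^ 2) / 2 = -(x ^ 2) by ring]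
  -- positivity of h 0
  have h0pos : 0 < h 0 := by
    rw [h0eq]
    apply Real.sqrt_pos.2
    have hm1 : (0:ℝ) < min lam (1/2) := lt_min hlam (by norm_num)
    have hm2 : min lam (1/2) < 1 := lt_of_le_of_lt (min_le_right _ _) (by norm_num)
    nlinarith [Real.log_neg hm1 hm2]
  -- interior derivatives
  have hdh : ∀ t : ℝ, 0 < t → HasDerivAt h (Real.exp (-(h t ^ 2) / 2)) t := by
    intro t ht
    have h1 : DifferentiableAt ℝ h t :=
      ((hsm.differentiableOn (by simp)) t (le_of_lt ht)).differentiableAt (Ici_mem_nhds ht)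
    have h2 := h1.hasDerivAt
    rwa [← derivWithin_of_mem_nhds (Ici_mem_nhds ht), hde t (le_of_lt ht)] at h2
  have hdf : ∀ t : ℝ, 0 < t → HasDerivAt f (Df t) t := by
    intro t ht
    have h1 : DifferentiableAt ℝ f t :=
      ((fsm.differentiableOn (by simp)) t (le_of_lt ht)).differentiableAt (Ici_mem_nhds ht)
    have h2 := h1.hasDerivAt
    rwa [← derivWithin_of_mem_nhds (Ici_mem_nhds ht)] at h2
  have hdDf : ∀ t : ℝ, 0 < t → HasDerivAt Df (C * Real.exp (-(h t ^ 2)) * f t) t := by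
    intro t ht
    have h1 : DifferentiableAt ℝ Df t :=
      ((hDfsm.differentiableOn (by simp)) t (le_of_lt ht)).differentiableAt (Ici_mem_nhds ht)
    have h2 := h1.hasDerivAt
    rwa [← derivWithin_of_mem_nhds (Ici_mem_nhds ht), fde t (le_of_lt ht)] at h2
  have hcont_f : ContinuousOn f (Ici 0) := fsm.continuousOn
  have hcont_h : ContinuousOn h (Ici 0) := hsm.continuousOn
  have hcont_Df : ContinuousOn Df (Ici 0) := hDfsm.continuousOn
  -- positivity of f
  have hfpos : ∀ t ∈ Ici (0:ℝ), 0 < f t := by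
    by_contra hcon
    push_neg at hcon
    obtain ⟨T₀, hT₀mem, hT₀⟩ := hcon
    set K := Ici (0:ℝ) ∩ f ⁻¹' (Iic 0) with hK
    have hKcl : IsClosed K := hcont_f.preimage_isClosed_of_isClosed isClosed_Ici isClosed_Iic
    have hKne : K.Nonempty := ⟨T₀, hT₀mem, hT₀⟩
    have hKbdd : BddBelow K := ⟨0, fun x hx => hx.1⟩
    have hTK : sInf K ∈ K := hKcl.csInf_mem hKne hKbdd
    set T := sInf K with hTdef
    have hfT : f T ≤ 0 := hTK.2
    have hT0 : 0 < T := by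
      rcases eq_or_lt_of_le (mem_Ici.1 hTK.1) with hEq | hLt
      · exfalso; rw [← hEq, f0] at hfT; linarith
      · exact hLt
    have hpos' : ∀ s ∈ Ico (0:ℝ) T, 0 < f s := by
      intro s hs
      by_contra hns
      push_neg at hns
      exact absurd (csInf_le hKbdd ⟨hs.1, hns⟩) (not_le.2 hs.2)
    have hmono1 : MonotoneOn Df (Icc 0 T) := by
      apply monotoneOn_of_hasDerivWithinAt_nonneg (convex_Icc 0 T)
        (hcont_Df.mono Icc_subset_Ici_self) (f' := fun x => C * Real.exp (-(h x ^ 2)) * f x)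
      · intro x hx; rw [interior_Icc] at hx; exact (hdDf x hx.1).hasDerivWithinAt
      · intro x hx; rw [interior_Icc] at hx
        have := hpos' x ⟨le_of_lt hx.1, hx.2⟩
        positivity
    have hDfge : ∀ x ∈ Icc (0:ℝ) T, 0 ≤ Df x := by
      intro x hx
      have := hmono1 ⟨le_refl 0, le_of_lt hT0⟩ hx hx.1
      rwa [f'0] at this
    have hmono2 : MonotoneOn f (Icc 0 T) := by
      apply monotoneOn_of_hasDerivWithinAt_nonneg (convex_Icc 0 T)
        (hcont_f.mono Icc_subset_Ici_self) (f' := Df)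
      · intro x hx; rw [interior_Icc] at hx; exact (hdf x hx.1).hasDerivWithinAt
      · intro x hx; rw [interior_Icc] at hx
        exact hDfge x ⟨le_of_lt hx.1, le_of_lt hx.2⟩
    have : f 0 ≤ f T :=
      hmono2 ⟨le_refl 0, le_of_lt hT0⟩ ⟨le_of_lt hT0, le_refl T⟩ (le_of_lt hT0)
    rw [f0] at this
    linarith
  -- Df nonneg, f ≥ 1
  have hmonoDf : MonotoneOn Df (Ici 0) := by
    apply monotoneOn_of_hasDerivWithinAt_nonneg (convex_Ici 0) hcont_Df
      (f' := fun t => C * Real.exp (-(h t ^ 2)) * f t)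
    · intro x hx; rw [interior_Ici] at hx; exact (hdDf x hx).hasDerivWithinAt
    · intro x hx; rw [interior_Ici] at hx
      have := hfpos x (mem_Ici.2 (le_of_lt hx))
      positivity
  have hDfnonneg : ∀ t ∈ Ici (0:ℝ), 0 ≤ Df t := by
    intro t ht
    have := hmonoDf (self_mem_Ici) ht ht
    rwa [f'0] at this
  have hmonof : MonotoneOn f (Ici 0) := by
    apply monotoneOn_of_hasDerivWithinAt_nonneg (convex_Ici 0) hcont_f (f' := Df)
    · intro x hx; rw [interior_Ici] at hx; exact (hdf x hx).hasDerivWithinAt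
    · intro x hx; rw [interior_Ici] at hx
      exact hDfnonneg x (mem_Ici.2 (le_of_lt hx))
  -- h monotone, h ≥ h 0 > 0
  have hmonoh : MonotoneOn h (Ici 0) := by
    apply monotoneOn_of_hasDerivWithinAt_nonneg (convex_Ici 0) hcont_h
      (f' := fun t => Real.exp (-(h t ^ 2) / 2))
    · intro x hx; rw [interior_Ici] at hx; exact (hdh x hx).hasDerivWithinAt
    · intro x _; positivity
  have hhpos : ∀ t ∈ Ici (0:ℝ), 0 < h t := fun t ht =>
    lt_of_lt_of_le h0pos (hmonoh self_mem_Ici ht ht)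
  -- h tends to infinity
  have htop : Tendsto h atTop atTop := by
    have hunb : ∀ b : ℝ, ∃ t, 0 ≤ t ∧ b ≤ h t := by
      intro b
      set b' := max b (h 0) with hb'
      have hb'pos : 0 < b' := lt_of_lt_of_le h0pos (le_max_right _ _)
      set c := Real.exp (-(b' ^ 2) / 2) with hc
      have hcpos : 0 < c := Real.exp_pos _
      set t1 := (b' - h 0) / c with ht1
      have ht1nn : 0 ≤ t1 := div_nonneg (sub_nonneg.2 (le_max_right _ _)) hcpos.le
      by_cases hcase : b' ≤ h t1
      · exact ⟨t1, ht1nn, le_trans (le_max_left _ _) hcase⟩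
      · exfalso
        push_neg at hcase
        have hhb : ∀ s ∈ Icc (0:ℝ) t1, h s < b' := fun s hs =>
          lt_of_le_of_lt (hmonoh hs.1 (mem_Ici.2 ht1nn) hs.2) hcase
        have hmonou : MonotoneOn (fun s => h s - c * s) (Icc 0 t1) := by
          apply monotoneOn_of_hasDerivWithinAt_nonneg (convex_Icc 0 t1)
            ((hcont_h.mono Icc_subset_Ici_self).sub
              (continuous_const.mul continuous_id).continuousOn)
            (f' := fun s => Real.exp (-(h s ^ 2) / 2) - c)
          · intro x hx; rw [interior_Icc] at hx
            have := (hdh x hx.1).sub ((hasDerivAt_id x).const_mul c)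
            have h2 : HasDerivAt (fun s => h s - c * s) (Real.exp (-(h x ^ 2) / 2) - c * 1) x := this
            rw [mul_one] at h2; exact h2.hasDerivWithinAt
          · intro x hx; rw [interior_Icc] at hx
            have hx0 : 0 ≤ h x := le_of_lt (hhpos x (mem_Ici.2 hx.1.le))
            have hxb : h x < b' := hhb x ⟨hx.1.le, hx.2.le⟩
            have hle : -(b' ^ 2) / 2 ≤ -(h x ^ 2) / 2 := by nlinarith
            have := Real.exp_le_exp.2 hle
            rw [← hc] at this
            linarith
        have hkey := hmonou ⟨le_refl 0, ht1nn⟩ ⟨ht1nn, le_refl t1⟩ ht1nn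
        simp only [mul_zero, sub_zero] at hkey
        have hct1 : c * t1 = b' - h 0 := by
          rw [ht1]; field_simp
        linarith
    rw [tendsto_atTop]
    intro b
    obtain ⟨t0, ht0, hb⟩ := hunb b
    filter_upwards [eventually_ge_atTop t0] with t ht
    exact le_trans hb (hmonoh (mem_Ici.2 ht0) (mem_Ici.2 (le_trans ht0 ht)) ht)
  -- main quantities
  set E : ℝ → ℝ := fun t => Real.exp (h t ^ 2 / 2) with hE
  set g : ℝ → ℝ := fun t => f t * Real.exp (-(h t ^ 2) / 2) with hg
  set W : ℝ → ℝ := fun t => Df t * E t - f t * h t with hW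
  have hdE : ∀ t : ℝ, 0 < t → HasDerivAt E (h t) t := by
    intro t ht
    have h1 := (((hdh t ht).pow 2).div_const 2).exp
    rw [hE]
    convert h1 using 1
    · rfl
    simp only [pow_one, Nat.cast_ofNat, Pi.pow_apply, Nat.reduceSub]
    linear_combination (-(h t)) * key (h t)
  have hdW : ∀ t : ℝ, 0 < t → HasDerivAt W ((C - 1) * g t) t := by
    intro t ht
    have h1 := ((hdDf t ht).mul (hdE t ht)).sub ((hdf t ht).mul (hdh t ht))
    rw [hW]
    convert h1 using 1
    · rfl
    · rfl
    · rfl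
    rw [hg]
    simp only
    have hEx : E t = Real.exp (h t ^ 2 / 2) := by rw [hE]
    rw [hEx]
    linear_combination (-(C * f t * Real.exp (h t ^ 2 / 2))) * e2 (h t) +
      (-(C * f t * Real.exp (-(h t ^ 2) / 2))) * key (h t)
  have hdg : ∀ t : ℝ, 0 < t → HasDerivAt g (Real.exp (-(h t ^ 2)) * W t) t := by
    intro t ht
    have h1 := (hdf t ht).mul ((((hdh t ht).pow 2).neg.div_const 2).exp)
    rw [hg, hW]
    convert h1 using 1
    · rfl
    · rfl
    · rfl
    simp only [pow_one, Nat.cast_ofNat, Pi.pow_apply, Pi.neg_apply, Nat.reduceSub]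
    have hEx : E t = Real.exp (h t ^ 2 / 2) := by rw [hE]
    rw [hEx]
    linear_combination (Df t * Real.exp (h t ^ 2 / 2) - f t * h t) * e2 (h t) +
      (Df t * Real.exp (-(h t ^ 2) / 2)) * key (h t)
  have hcont_E : ContinuousOn E (Ici 0) := by
    exact (Real.continuous_exp.comp_continuousOn ((hcont_h.pow 2).div_const 2))
  have hcont_g : ContinuousOn g (Ici 0) := by
    exact hcont_f.mul (Real.continuous_exp.comp_continuousOn (((hcont_h.pow 2).neg).div_const 2))
  have hcont_W : ContinuousOn W (Ici 0) := (hcont_Df.mul hcont_E).sub (hcont_f.mul hcont_h)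
  have hgnonneg : ∀ t ∈ Ici (0:ℝ), 0 ≤ g t := fun t ht =>
    le_of_lt (mul_pos (hfpos t ht) (Real.exp_pos _))
  have hW0 : W 0 = -h 0 := by
    simp only [hW, f'0, f0, zero_mul, one_mul, zero_sub]
  have hWanti : AntitoneOn W (Ici 0) := by
    apply antitoneOn_of_hasDerivWithinAt_nonpos (convex_Ici 0) hcont_W
      (f' := fun t => (C - 1) * g t)
    · intro x hx; rw [interior_Ici] at hx; exact (hdW x hx).hasDerivWithinAt
    · intro x hx; rw [interior_Ici] at hx
      have := hgnonneg x (mem_Ici.2 (le_of_lt hx))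
      nlinarith
  have hWneg : ∀ t ∈ Ici (0:ℝ), W t ≤ -h 0 := by
    intro t ht
    have := hWanti self_mem_Ici ht ht
    rwa [hW0] at this
  have hganti : AntitoneOn g (Ici 0) := by
    apply antitoneOn_of_hasDerivWithinAt_nonpos (convex_Ici 0) hcont_g
      (f' := fun t => Real.exp (-(h t ^ 2)) * W t)
    · intro x hx; rw [interior_Ici] at hx; exact (hdg x hx).hasDerivWithinAt
    · intro x hx; rw [interior_Ici] at hx
      have h1 := hWneg x (mem_Ici.2 (le_of_lt hx))
      have h2 := Real.exp_pos (-(h x ^ 2))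
      nlinarith
  -- limit of g
  set L := sInf (g '' Ici 0) with hL
  have hne : (g '' Ici 0).Nonempty := ⟨g 0, mem_image_of_mem g self_mem_Ici⟩
  have hbdd : BddBelow (g '' Ici 0) := by
    refine ⟨0, ?_⟩; rintro y ⟨t, ht, rfl⟩; exact hgnonneg t ht
  have hLnonneg : 0 ≤ L := le_csInf hne (by rintro y ⟨t, ht, rfl⟩; exact hgnonneg t ht)
  have hLle : ∀ t ∈ Ici (0:ℝ), L ≤ g t := fun t ht => csInf_le hbdd (mem_image_of_mem g ht)
  have hgL : Tendsto g atTop (nhds L) := by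
    rw [Metric.tendsto_atTop]
    intro ε hε
    obtain ⟨y, hy, hylt⟩ := exists_lt_of_csInf_lt hne
      (show sInf (g '' Ici 0) < L + ε by rw [← hL]; linarith)
    obtain ⟨t0, ht0, rfl⟩ := hy
    refine ⟨t0, fun t ht => ?_⟩
    have ht' : t ∈ Ici (0:ℝ) := le_trans ht0 ht
    have h1 : L ≤ g t := hLle t ht'
    have h2 : g t ≤ g t0 := hganti ht0 ht' ht
    rw [Real.dist_eq, abs_lt]
    constructor <;> linarith
  have hL0 : L = 0 := by
    by_contra hLne
    have hLpos : 0 < L := lt_of_le_of_ne hLnonneg (Ne.symm hLne)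
    have hE0pos : 0 < E 0 := by rw [hE]; positivity
    set c := (1 - C) * L with hc
    have hcpos : 0 < c := by nlinarith
    set c2 := min c (h 0 ^ 2 / E 0) with hc2
    have hc2pos : 0 < c2 := lt_min hcpos (div_pos (pow_pos h0pos 2) hE0pos)
    set ψ : ℝ → ℝ := fun t => W t + c2 * (E t / h t) with hψ
    have hdψ : ∀ t : ℝ, 0 < t → HasDerivAt ψ
        ((C - 1) * g t +
          c2 * ((h t * h t - E t * Real.exp (-(h t ^ 2) / 2)) / h t ^ 2)) t := by
      intro t ht
      have hht : h t ≠ 0 := (hhpos t (mem_Ici.2 ht.le)).ne'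
      have h1 := (hdW t ht).add (((hdE t ht).div (hdh t ht) hht).const_mul c2)
      rw [hψ]
      convert h1 using 1
      all_goals rfl
    have hcont_ψ : ContinuousOn ψ (Ici 0) := by
      apply hcont_W.add (continuousOn_const.mul (hcont_E.div hcont_h ?_))
      intro x hx; exact (hhpos x hx).ne'
    have hψanti : AntitoneOn ψ (Ici 0) := by
      apply antitoneOn_of_hasDerivWithinAt_nonpos (convex_Ici 0) hcont_ψ
        (f' := fun t => (C - 1) * g t +
          c2 * ((h t * h t - E t * Real.exp (-(h t ^ 2) / 2)) / h t ^ 2))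
      · intro x hx; rw [interior_Ici] at hx; exact (hdψ x hx).hasDerivWithinAt
      · intro x hx; rw [interior_Ici] at hx
        have hgx : L ≤ g x := hLle x (mem_Ici.2 hx.le)
        have h1 : (C - 1) * g x ≤ -c := by rw [hc]; nlinarith
        have hhx : 0 < h x := hhpos x (mem_Ici.2 hx.le)
        have hExa : E x * Real.exp (-(h x ^ 2) / 2) = 1 := by
          rw [hE]; rw [mul_comm]; exact key (h x)
        have h2 : (h x * h x - E x * Real.exp (-(h x ^ 2) / 2)) / h x ^ 2 ≤ 1 := by
          rw [hExa, div_le_one (by positivity)]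
          nlinarith
        have h3 : c2 ≤ c := min_le_left _ _
        nlinarith
    have hψ0 : ψ 0 ≤ 0 := by
      have k1 : c2 * (E 0 / h 0) ≤ h 0 ^ 2 / E 0 * (E 0 / h 0) :=
        mul_le_mul_of_nonneg_right (min_le_right _ _) (by positivity)
      have k2 : h 0 ^ 2 / E 0 * (E 0 / h 0) = h 0 := by
        field_simp
      rw [hψ]
      simp only [hW0]
      linarith
    have hWle : ∀ t ∈ Ici (0:ℝ), W t ≤ -(c2 * (E t / h t)) := by
      intro t ht
      have := (hψanti self_mem_Ici ht ht).trans hψ0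
      rw [hψ] at this
      simp only at this
      linarith
    set φ : ℝ → ℝ := fun t => g t + c2 * Real.log (h t) with hφ
    have hdφ : ∀ t : ℝ, 0 < t → HasDerivAt φ
        (Real.exp (-(h t ^ 2)) * W t + c2 * (Real.exp (-(h t ^ 2) / 2) / h t)) t := by
      intro t ht
      have hht : h t ≠ 0 := (hhpos t (mem_Ici.2 ht.le)).ne'
      have h1 := (hdg t ht).add (((hdh t ht).log hht).const_mul c2)
      rw [hφ]
      convert h1 using 1
      all_goals rfl
    have hcont_φ : ContinuousOn φ (Ici 0) := by
      apply hcont_g.add (continuousOn_const.mul ?_)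
      exact Real.continuousOn_log.comp hcont_h (fun x hx => (hhpos x hx).ne')
    have hφanti : AntitoneOn φ (Ici 0) := by
      apply antitoneOn_of_hasDerivWithinAt_nonpos (convex_Ici 0) hcont_φ
        (f' := fun t => Real.exp (-(h t ^ 2)) * W t + c2 * (Real.exp (-(h t ^ 2) / 2) / h t))
      · intro x hx; rw [interior_Ici] at hx; exact (hdφ x hx).hasDerivWithinAt
      · intro x hx; rw [interior_Ici] at hx
        have hhx : 0 < h x := hhpos x (mem_Ici.2 hx.le)
        have hW1 : W x ≤ -(c2 * (E x / h x)) := hWle x (mem_Ici.2 hx.le)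
        have hexpos : (0:ℝ) < Real.exp (-(h x ^ 2)) := Real.exp_pos _
        have h1 : Real.exp (-(h x ^ 2)) * W x ≤
            Real.exp (-(h x ^ 2)) * (-(c2 * (E x / h x))) :=
          mul_le_mul_of_nonneg_left hW1 hexpos.le
        have hid : Real.exp (-(h x ^ 2)) * (E x / h x) =
            Real.exp (-(h x ^ 2) / 2) / h x := by
          rw [hE]
          simp only
          rw [e2 (h x)]
          rw [mul_div_assoc', mul_assoc, key (h x), mul_one]
        have h2 : Real.exp (-(h x ^ 2)) * (-(c2 * (E x / h x))) =
            -(c2 * (Real.exp (-(h x ^ 2) / 2) / h x)) := by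
          rw [← hid]; ring
        linarith [h1, h2.le, h2.ge]
    -- now derive the contradiction
    have hlogtop : Tendsto (fun t => Real.log (h t)) atTop atTop :=
      Real.tendsto_log_atTop.comp htop
    have hev : ∀ᶠ t in atTop,
        (g 0 + c2 * Real.log (h 0) - L + 1) / c2 ≤ Real.log (h t) :=
      hlogtop.eventually_ge_atTop _
    obtain ⟨t1, ht1, ht1nn⟩ := (hev.and (eventually_ge_atTop (0:ℝ))).exists
    have hφle : φ t1 ≤ φ 0 := hφanti self_mem_Ici (mem_Ici.2 ht1nn) ht1nn
    rw [hφ] at hφle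
    simp only at hφle
    have hlog : g 0 + c2 * Real.log (h 0) - L + 1 ≤ c2 * Real.log (h t1) := by
      rw [div_le_iff₀ hc2pos] at ht1
      linarith [ht1]
    have hgt1 : L ≤ g t1 := hLle t1 (mem_Ici.2 ht1nn)
    linarith
  have hg0 : Tendsto g atTop (nhds 0) := hL0 ▸ hgL
  constructor
  · apply hg0.congr'
    filter_upwards [eventually_ge_atTop (0:ℝ)] with t ht
    rw [hg]; simp only; rw [hde t ht]
  · exact hg0
end
end

section
/- For all t ≥ 0 the quotient f_C'(t)/(f_C(t)·h₀(t)·h₀'(t)) lies in the interval [0,1]. -/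
open Set Filter

noncomputable section

/-- For all `t ≥ 0`, the quotient `f_C' / (f_C · h₀ · h₀')` lies in `[0,1]`. -/
theorem stmt_8 (lam : ℝ) (hlam : 0 < lam) (h : ℝ → ℝ) (hh : IsH0Sol lam h)
    (C : ℝ) (hC : 0 < C) (hC' : C < 1) (f : ℝ → ℝ) (hf : IsFCSol C h f) :
    ∀ t ∈ Ici (0:ℝ),
      derivWithin f (Ici 0) t / (f t * h t * derivWithin h (Ici 0) t)
        ∈ Icc (0:ℝ) 1 := by
  obtain ⟨hhs, hhd, hh0⟩ := hh
  obtain ⟨hfs, hfd, hf0, hf'0⟩ := hf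
  have hU : UniqueDiffOn ℝ (Ici (0:ℝ)) := uniqueDiffOn_Ici 0
  set E : ℝ → ℝ := fun t => Real.exp (-(h t ^ 2) / 2) with hE_def
  set F' : ℝ → ℝ := derivWithin f (Ici 0) with hF'_def
  set W : ℝ → ℝ := fun t => f t * (h t * E t) - F' t with hW_def
  set W' : ℝ → ℝ := fun t =>
    F' t * (h t * E t) + f t * ((1 - h t ^ 2) * (E t * E t)) - C * (E t * E t) * f t
    with hW'_def
  have hEpos : ∀ t, 0 < E t := fun t => Real.exp_pos _
  have hEE : ∀ t, E t * E t = Real.exp (-(h t ^ 2)) := by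
    intro t
    rw [← Real.exp_add]
    ring_nf
  -- continuity facts
  have hhC : ContinuousOn h (Ici 0) := hhs.continuousOn
  have hfC : ContinuousOn f (Ici 0) := hfs.continuousOn
  have hF'cd : ContDiffOn ℝ (⊤ : ℕ∞) F' (Ici 0) := hfs.derivWithin hU (by simp)
  have hF'C : ContinuousOn F' (Ici 0) := hF'cd.continuousOn
  have hEC : ContinuousOn E (Ici 0) :=
    Real.continuous_exp.comp_continuousOn (((hhC.pow 2).neg).div_const 2)
  have hWC : ContinuousOn W (Ici 0) := (hfC.mul (hhC.mul hEC)).sub hF'C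
  have hW'C : ContinuousOn W' (Ici 0) := by
    apply ContinuousOn.sub
    · apply ContinuousOn.add
      · exact hF'C.mul (hhC.mul hEC)
      · exact hfC.mul ((continuousOn_const.sub (hhC.pow 2)).mul (hEC.mul hEC))
    · exact (continuousOn_const.mul (hEC.mul hEC)).mul hfC
  -- derivative facts
  have Hh : ∀ t ∈ Ici (0:ℝ), HasDerivWithinAt h (E t) (Ici 0) t := by
    intro t ht
    have := ((hhs.differentiableOn (by simp)) t ht).hasDerivWithinAt
    rwa [hhd t ht] at this
  have Hf : ∀ t ∈ Ici (0:ℝ), HasDerivWithinAt f (F' t) (Ici 0) t := fun t ht =>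
    ((hfs.differentiableOn (by simp)) t ht).hasDerivWithinAt
  have HF' : ∀ t ∈ Ici (0:ℝ),
      HasDerivWithinAt F' (C * (E t * E t) * f t) (Ici 0) t := by
    intro t ht
    have := ((hF'cd.differentiableOn (by simp)) t ht).hasDerivWithinAt
    rwa [hfd t ht, ← hEE t] at this
  have HE : ∀ t ∈ Ici (0:ℝ),
      HasDerivWithinAt E (-(h t) * E t * E t) (Ici 0) t := by
    intro t ht
    have h1 : HasDerivWithinAt (fun u => -(h u ^ 2) / 2)
        (-(2 * h t ^ 1 * E t) / 2) (Ici 0) t := (((Hh t ht).pow 2).neg).div_const 2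
    have h2 := h1.exp
    convert h2 using 1
    ring
  have HW : ∀ t ∈ Ici (0:ℝ), HasDerivWithinAt W (W' t) (Ici 0) t := by
    intro t ht
    have h1 : HasDerivWithinAt (fun u => f u * (h u * E u))
        (F' t * (h t * E t) + f t * (E t * E t + h t * (-(h t) * E t * E t)))
        (Ici 0) t := (Hf t ht).mul ((Hh t ht).mul (HE t ht))
    have h2 := h1.sub (HF' t ht)
    rw [show W' t = F' t * (h t * E t) + f t * (E t * E t + h t * (-(h t) * E t * E t)) - C * (E t * E t) * f t by
      simp only [hW'_def]
      ring]
    exact h2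
  -- positivity of h
  have hh0pos : 0 < h 0 := by
    rw [hh0]
    apply Real.sqrt_pos.2
    have hlog : Real.log (min lam (1/2)) < 0 :=
      Real.log_neg (lt_min hlam (by norm_num)) ((min_le_right _ _).trans_lt (by norm_num))
    nlinarith
  have hsm : StrictMonoOn h (Ici 0) := by
    apply strictMonoOn_of_deriv_pos (convex_Ici 0) hhC
    intro x hx
    rw [interior_Ici] at hx
    rw [← derivWithin_of_mem_nhds (Ici_mem_nhds hx), hhd x (mem_Ici.2 (le_of_lt hx))]
    exact Real.exp_pos _
  have hhpos : ∀ t ∈ Ici (0:ℝ), 0 < h t := by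
    intro t ht
    exact hh0pos.trans_le (hsm.monotoneOn self_mem_Ici ht ht)
  -- the key invariant
  have key : ∀ t ∈ Ici (0:ℝ), 0 < f t ∧ 0 < W t := by
    by_contra hcon
    push_neg at hcon
    obtain ⟨t0, ht0, hbad0⟩ := hcon
    set B : Set ℝ := (Ici 0 ∩ f ⁻¹' Iic 0) ∪ (Ici 0 ∩ W ⁻¹' Iic 0) with hB_def
    have hBne : B.Nonempty := by
      refine ⟨t0, ?_⟩
      rcases le_or_gt (f t0) 0 with hle | hlt
      · exact Or.inl ⟨ht0, hle⟩
      · exact Or.inr ⟨ht0, not_lt.1 fun hW => absurd (hbad0 hlt) (not_le.2 hW)⟩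
    have hBbdd : BddBelow B := ⟨0, fun x hx => by rcases hx with ⟨hx, _⟩ | ⟨hx, _⟩ <;> exact hx⟩
    have hBsub : B ⊆ Ici 0 := fun x hx => by rcases hx with ⟨hx, _⟩ | ⟨hx, _⟩ <;> exact hx
    have hBclosed : IsClosed B :=
      (hfC.preimage_isClosed_of_isClosed isClosed_Ici isClosed_Iic).union
        (hWC.preimage_isClosed_of_isClosed isClosed_Ici isClosed_Iic)
    set T := sInf B with hT_def
    have hTB : T ∈ B := hBclosed.csInf_mem hBne hBbdd
    have hT0 : 0 ≤ T := hBsub hTB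
    have hW0 : W 0 = h 0 * E 0 := by simp [hW_def, hf0, hf'0]
    have hTpos : 0 < T := by
      rcases hT0.lt_or_eq with h' | h'
      · exact h'
      · exfalso
        rcases hTB with ⟨_, hle⟩ | ⟨_, hle⟩
        · rw [← h'] at hle; simp only [mem_preimage, mem_Iic, hf0] at hle; linarith
        · rw [← h'] at hle
          simp only [mem_preimage, mem_Iic] at hle
          rw [hW0] at hle
          nlinarith [hhpos 0 self_mem_Ici, hEpos 0]
    have hbefore : ∀ u, 0 ≤ u → u < T → 0 < f u ∧ 0 < W u := by
      intro u hu huT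
      by_contra hcon2
      have huB : u ∈ B := by
        push_neg at hcon2
        rcases le_or_gt (f u) 0 with hle | hlt
        · exact Or.inl ⟨hu, hle⟩
        · exact Or.inr ⟨hu, hcon2 hlt⟩
      exact absurd (csInf_le hBbdd huB) (not_le.2 huT)
    -- F' is strictly monotone on [0, T]
    have hIccsub : Icc (0:ℝ) T ⊆ Ici 0 := fun x hx => hx.1
    have hF'mono : StrictMonoOn F' (Icc 0 T) := by
      apply strictMonoOn_of_deriv_pos (convex_Icc 0 T) (hF'C.mono hIccsub)
      intro x hx
      rw [interior_Icc] at hx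
      have hx0 : (0:ℝ) < x := hx.1
      rw [← derivWithin_of_mem_nhds (Ici_mem_nhds hx0), hfd x hx0.le]
      have := (hbefore x hx0.le hx.2).1
      positivity
    have hF'pos : ∀ x ∈ Ioc (0:ℝ) T, 0 < F' x := by
      intro x hx
      have := hF'mono (left_mem_Icc.2 hT0) ⟨hx.1.le, hx.2⟩ hx.1
      rwa [hf'0] at this
    have hfmono : StrictMonoOn f (Icc 0 T) := by
      apply strictMonoOn_of_deriv_pos (convex_Icc 0 T) (hfC.mono hIccsub)
      intro x hx
      rw [interior_Icc] at hx
      rw [← derivWithin_of_mem_nhds (Ici_mem_nhds hx.1)]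
      exact hF'pos x ⟨hx.1, hx.2.le⟩
    have hfT : 1 < f T := by
      have := hfmono (left_mem_Icc.2 hT0) (right_mem_Icc.2 hT0) hTpos
      rwa [hf0] at this
    -- W T = 0
    have hWTle : W T ≤ 0 := by
      rcases hTB with ⟨_, hle⟩ | ⟨_, hle⟩
      · simp only [mem_preimage, mem_Iic] at hle; linarith
      · simpa only [mem_preimage, mem_Iic] using hle
    have hWTge : 0 ≤ W T := by
      have hGclosed : IsClosed (Ici 0 ∩ W ⁻¹' Ici 0) :=
        hWC.preimage_isClosed_of_isClosed isClosed_Ici isClosed_Ici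
      have hsub : Ico (0:ℝ) T ⊆ Ici 0 ∩ W ⁻¹' Ici 0 := by
        intro u hu
        exact ⟨hu.1, (hbefore u hu.1 hu.2).2.le⟩
      have hclos : Icc (0:ℝ) T ⊆ Ici 0 ∩ W ⁻¹' Ici 0 := by
        rw [← closure_Ico hTpos.ne]
        exact hGclosed.closure_subset_iff.2 hsub
      exact (hclos (right_mem_Icc.2 hT0)).2
    have hWT : W T = 0 := le_antisymm hWTle hWTge
    -- W' T > 0
    have hF'T : F' T = f T * (h T * E T) := by
      have := hWT
      simp only [hW_def] at this
      linarith
    have hW'T : 0 < W' T := by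
      have heq : W' T = f T * (E T * E T) * (1 - C) := by
        simp only [hW'_def, hF'T]; ring
      rw [heq]
      have h1 : (0:ℝ) < f T := by linarith
      have h2 : (0:ℝ) < 1 - C := by linarith
      positivity
    -- W' > 0 near T
    have hev : {x | 0 < W' x} ∈ nhdsWithin T (Ici 0) :=
      (hW'C T hT0).eventually (eventually_gt_nhds hW'T)
    obtain ⟨U, hUopen, hTU, hUsub⟩ := mem_nhdsWithin.1 hev
    obtain ⟨ε, hεpos, hball⟩ := Metric.isOpen_iff.1 hUopen T hTU
    have hε : ∀ x : ℝ, |x - T| < ε → 0 ≤ x → 0 < W' x := by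
      intro x hx hx0
      exact hUsub ⟨hball (by rwa [Metric.mem_ball, Real.dist_eq]), hx0⟩
    set a := max (T - ε / 2) (T / 2) with ha_def
    have haT : a < T := by
      apply max_lt <;> linarith
    have ha0 : 0 < a := lt_of_lt_of_le (by linarith) (le_max_right _ _)
    have hW'on : ∀ x ∈ Ioo a T, 0 < W' x := by
      intro x hx
      apply hε
      · rw [abs_lt]
        constructor
        · have : T - ε / 2 ≤ a := le_max_left _ _
          linarith [hx.1, hx.2]
        · linarith [hx.2]
      · exact le_of_lt (lt_trans ha0 hx.1)
    have hWmono : StrictMonoOn W (Icc a T) := by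
      apply strictMonoOn_of_deriv_pos (convex_Icc a T)
        (hWC.mono (fun x hx => le_trans ha0.le hx.1))
      intro x hx
      rw [interior_Icc] at hx
      have hx0 : (0:ℝ) < x := lt_trans ha0 hx.1
      rw [((HW x hx0.le).hasDerivAt (Ici_mem_nhds hx0)).deriv]
      exact hW'on x hx
    have hWa : 0 < W a := (hbefore a ha0.le haT).2
    have := hWmono (left_mem_Icc.2 haT.le) (right_mem_Icc.2 haT.le) haT
    rw [hWT] at this
    linarith
  -- conclude
  have hfpos : ∀ t ∈ Ici (0:ℝ), 0 < f t := fun t ht => (key t ht).1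
  have hF'nonneg : ∀ t ∈ Ici (0:ℝ), 0 ≤ F' t := by
    intro t ht
    rcases (mem_Ici.1 ht).lt_or_eq with h' | h'
    · have hIccsub : Icc (0:ℝ) t ⊆ Ici 0 := fun x hx => hx.1
      have hmono : StrictMonoOn F' (Icc 0 t) := by
        apply strictMonoOn_of_deriv_pos (convex_Icc 0 t) (hF'C.mono hIccsub)
        intro x hx
        rw [interior_Icc] at hx
        rw [← derivWithin_of_mem_nhds (Ici_mem_nhds hx.1), hfd x hx.1.le]
        have := hfpos x hx.1.le
        positivity
      have := hmono (left_mem_Icc.2 ht) (right_mem_Icc.2 ht) h'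
      rw [hf'0] at this
      linarith
    · rw [← h', hf'0]
  intro t ht
  rw [hhd t ht]
  have hden : 0 < f t * h t * Real.exp (-(h t ^ 2) / 2) := by
    have := hfpos t ht
    have := hhpos t ht
    positivity
  constructor
  · exact div_nonneg (hF'nonneg t ht) hden.le
  · rw [div_le_one hden]
    have := (key t ht).2
    simp only [hW_def] at this
    linarith [this]
end
end

section
/- The function u = f_C' satisfies the ODE u''(t) + 2·h₀(t)·exp(−h₀(t)²/2)·u'(t) − C·exp(−h₀(t)²)·u(t) = 0 for all t ≥ 0. Moreover, the function v : [s₀,∞) → ℝ defined by v(s) = f_C'(h₀⁻¹(s)) satisfies v''(s) + s·v'(s) − C·v(s) = 0 for all s ≥ s₀, with v(s₀) = 0 and v'(s₀) = C·exp(−s₀²/2) > 0. -/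
open Set Filter

noncomputable section

set_option maxHeartbeats 1000000 in
/-- `u = f_C'` satisfies `u'' + 2 h₀ exp (-h₀^2/2) u' - C exp (-h₀^2) u = 0`, and
`v(s) = f_C'(h₀⁻¹(s))` satisfies `v'' + s v' - C v = 0` on `[s₀,∞)` with
`v s₀ = 0` and `v' s₀ = C exp (-s₀^2/2) > 0`. -/
theorem stmt_9 (lam : ℝ) (hlam : 0 < lam) (h : ℝ → ℝ) (hh : IsH0Sol lam h)
    (C : ℝ) (hC : 0 < C) (hC' : C < 1) (f : ℝ → ℝ) (hf : IsFCSol C h f)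
    (f1 f2 f3 : ℝ → ℝ)
    (hf1 : f1 = derivWithin f (Ici 0))
    (hf2 : f2 = derivWithin f1 (Ici 0))
    (hf3 : f3 = derivWithin f2 (Ici 0))
    (s₀ : ℝ) (hs₀ : s₀ = h 0)
    -- `hinv` is the inverse of `h₀ : [0,∞) → [s₀,∞)`
    (hinv : ℝ → ℝ)
    (hinv_left : ∀ t ∈ Ici (0:ℝ), hinv (h t) = t)
    (hinv_mem : ∀ s ∈ Ici s₀, hinv s ∈ Ici (0:ℝ))
    (hinv_right : ∀ s ∈ Ici s₀, h (hinv s) = s)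
    (v v1 v2 : ℝ → ℝ)
    (hv : v = fun s => f1 (hinv s))
    (hv1 : v1 = derivWithin v (Ici s₀))
    (hv2 : v2 = derivWithin v1 (Ici s₀)) :
    (∀ t ∈ Ici (0:ℝ),
      f3 t + 2 * h t * Real.exp (-(h t ^ 2) / 2) * f2 t
        - C * Real.exp (-(h t ^ 2)) * f1 t = 0) ∧
    (∀ s ∈ Ici s₀, v2 s + s * v1 s - C * v s = 0) ∧
    v s₀ = 0 ∧ v1 s₀ = C * Real.exp (-(s₀ ^ 2) / 2) ∧ 0 < v1 s₀ := by
  obtain ⟨hsm, hder, -⟩ := hh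
  obtain ⟨fsm, fode, f0, f'0⟩ := hf
  rw [← hf1] at fode f'0
  have U : UniqueDiffOn ℝ (Ici (0:ℝ)) := uniqueDiffOn_Ici 0
  have V : UniqueDiffOn ℝ (Ici s₀) := uniqueDiffOn_Ici s₀
  -- basic derivative facts
  have hhd : ∀ t ∈ Ici (0:ℝ), HasDerivWithinAt h (Real.exp (-(h t ^ 2) / 2)) (Ici 0) t := by
    intro t ht
    have := (hsm.differentiableOn (by simp) t ht).hasDerivWithinAt
    rwa [hder t ht] at this
  have hfd : ∀ t ∈ Ici (0:ℝ), HasDerivWithinAt f (f1 t) (Ici 0) t := by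
    intro t ht
    have := (fsm.differentiableOn (by simp) t ht).hasDerivWithinAt
    rwa [← hf1] at this
  have f1sm : ContDiffOn ℝ (⊤ : ℕ∞) f1 (Ici 0) := hf1 ▸ fsm.derivWithin U (by simp)
  have hf1d : ∀ t ∈ Ici (0:ℝ), HasDerivWithinAt f1 (f2 t) (Ici 0) t := by
    intro t ht
    have := (f1sm.differentiableOn (by simp) t ht).hasDerivWithinAt
    rwa [← hf2] at this
  have hpos : ∀ x : ℝ, 0 < Real.exp x := fun x => Real.exp_pos x
  -- Part 1
  have part1 : ∀ t ∈ Ici (0:ℝ),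
      f3 t + 2 * h t * Real.exp (-(h t ^ 2) / 2) * f2 t
        - C * Real.exp (-(h t ^ 2)) * f1 t = 0 := by
    intro t ht
    have e2 : EqOn f2 (fun t => C * Real.exp (-(h t ^ 2)) * f t) (Ici 0) := by
      intro x hx
      simp only [hf2]
      exact fode x hx
    have hD : HasDerivWithinAt (fun t => C * Real.exp (-(h t ^ 2)) * f t)
        (C * (Real.exp (-(h t ^ 2)) * -(2 * h t ^ 1 * Real.exp (-(h t ^ 2) / 2))) * f t
          + C * Real.exp (-(h t ^ 2)) * f1 t) (Ici 0) t := by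
      have h1 : HasDerivWithinAt (fun t => -(h t ^ 2))
          (-(2 * h t ^ 1 * Real.exp (-(h t ^ 2) / 2))) (Ici 0) t := ((hhd t ht).pow 2).neg
      have h2 := (h1.exp.const_mul C).mul (hfd t ht)
      simpa [mul_assoc, Pi.mul_def] using h2
    have hf3t : f3 t = C * (Real.exp (-(h t ^ 2)) * -(2 * h t ^ 1 * Real.exp (-(h t ^ 2) / 2))) * f t
          + C * Real.exp (-(h t ^ 2)) * f1 t := by
      rw [hf3, derivWithin_congr e2 (e2 ht)]
      exact hD.derivWithin (U t ht)
    rw [hf3t, e2 ht]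
    ring
  -- monotonicity of h and hinv, continuity of hinv
  have hsmono : StrictMonoOn h (Ici 0) := by
    apply strictMonoOn_of_deriv_pos (convex_Ici 0) (hsm.continuousOn)
    intro x hx
    rw [interior_Ici] at hx
    have hx' : (0:ℝ) ≤ x := le_of_lt hx
    rw [((hhd x hx').hasDerivAt (Ici_mem_nhds hx)).deriv]
    exact hpos _
  have hmemIci : ∀ t ∈ Ici (0:ℝ), h t ∈ Ici s₀ := by
    intro t ht
    rw [mem_Ici, hs₀]
    exact hsmono.monotoneOn self_mem_Ici ht ht
  have hinv0 : hinv s₀ = 0 := by rw [hs₀]; exact hinv_left 0 Set.self_mem_Ici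
  have hinvmono : StrictMonoOn hinv (Ici s₀) := by
    intro a ha b hb hab
    by_contra hle
    push_neg at hle
    have hba : h (hinv b) ≤ h (hinv a) := by
      rcases eq_or_lt_of_le hle with heq | hlt
      · rw [heq]
      · exact le_of_lt (hsmono (hinv_mem b hb) (hinv_mem a ha) hlt)
    rw [hinv_right a ha, hinv_right b hb] at hba
    exact absurd hba (not_le.mpr hab)
  have hinvcont : ∀ s ∈ Ici s₀, ContinuousWithinAt hinv (Ici s₀) s := by
    intro s hs
    have hright : ∀ b > hinv s, ∃ c ∈ Ici s₀, hinv c ∈ Ioc (hinv s) b := by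
      intro b hb
      have hb0 : (0:ℝ) ≤ b := le_trans (hinv_mem s hs) (le_of_lt hb)
      exact ⟨h b, hmemIci b hb0, by rw [hinv_left b hb0]; exact ⟨hb, le_rfl⟩⟩
    rcases eq_or_lt_of_le (mem_Ici.mp hs) with heq | hlt
    · rw [← heq]
      rw [← heq] at hright
      exact hinvmono.continuousWithinAt_right_of_exists_between self_mem_nhdsWithin hright
    · apply ContinuousAt.continuousWithinAt
      apply hinvmono.continuousAt_of_exists_between (Ici_mem_nhds hlt) _ hright
      intro b hb
      have htpos : 0 < hinv s := by
        rw [← hinv0]; exact hinvmono self_mem_Ici hs hlt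
      refine ⟨h (max b 0), hmemIci _ (le_max_right b 0), ?_⟩
      rw [hinv_left _ (le_max_right b 0)]
      exact ⟨le_max_left b 0, max_lt hb htpos⟩
  -- derivative of hinv
  have hinvd : ∀ s ∈ Ici s₀,
      HasDerivWithinAt hinv (Real.exp (-(s ^ 2) / 2))⁻¹ (Ici s₀) s := by
    intro s hs
    have ht : hinv s ∈ Ici (0:ℝ) := hinv_mem s hs
    have hts : h (hinv s) = s := hinv_right s hs
    rw [hasDerivWithinAt_iff_tendsto_slope]
    have hslope : Tendsto (slope h (hinv s)) (nhdsWithin (hinv s) (Ici 0 \ {hinv s}))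
        (nhds (Real.exp (-(s ^ 2) / 2))) := by
      have := hasDerivWithinAt_iff_tendsto_slope.mp (hhd (hinv s) ht)
      rwa [hts] at this
    have htend : Tendsto hinv (nhdsWithin s (Ici s₀ \ {s})) (nhdsWithin (hinv s) (Ici 0 \ {hinv s})) := by
      apply ((hinvcont s hs).mono diff_subset).tendsto_nhdsWithin
      intro x hx
      refine ⟨hinv_mem x hx.1, ?_⟩
      simp only [mem_singleton_iff]
      intro hxe
      exact hx.2 (show x ∈ ({s} : Set ℝ) by
        rw [mem_singleton_iff, ← hinv_right x hx.1, hxe, hts])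
    have hmain := (hslope.comp htend).inv₀ (ne_of_gt (hpos _))
    apply hmain.congr'
    filter_upwards [self_mem_nhdsWithin] with x hx
    have hhx : h (hinv x) = x := hinv_right x hx.1
    simp only [Function.comp_apply, slope_def_field]
    rw [hhx, hts, inv_div]
  have hmapsTo : MapsTo hinv (Ici s₀) (Ici 0) := fun x hx => hinv_mem x hx
  -- derivative of v
  have hvd : ∀ s ∈ Ici s₀,
      HasDerivWithinAt v (C * Real.exp (-(s ^ 2) / 2) * f (hinv s)) (Ici s₀) s := by
    intro s hs
    have ht : hinv s ∈ Ici (0:ℝ) := hinv_mem s hs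
    have hcomp := (hf1d (hinv s) ht).comp s (hinvd s hs) hmapsTo
    have hval : f2 (hinv s) * (Real.exp (-(s ^ 2) / 2))⁻¹
        = C * Real.exp (-(s ^ 2) / 2) * f (hinv s) := by
      have hsq : Real.exp (-(s ^ 2)) = Real.exp (-(s ^ 2) / 2) * Real.exp (-(s ^ 2) / 2) := by
        rw [← Real.exp_add]; congr 1; ring
      rw [hf2, fode (hinv s) ht, hinv_right s hs, hsq]
      obtain ⟨E, hEpos, hEeq⟩ : ∃ E : ℝ, 0 < E ∧ Real.exp (-(s ^ 2) / 2) = E :=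
        ⟨Real.exp (-(s ^ 2) / 2), hpos _, rfl⟩
      rw [hEeq]
      field_simp
    rw [hval] at hcomp
    rw [hv]
    exact hcomp
  have hv1eq : ∀ s ∈ Ici s₀, v1 s = C * Real.exp (-(s ^ 2) / 2) * f (hinv s) := by
    intro s hs
    rw [hv1]
    exact (hvd s hs).derivWithin (V s hs)
  -- derivative of the explicit formula for v1
  have hwd : ∀ s ∈ Ici s₀,
      HasDerivWithinAt (fun s => C * Real.exp (-(s ^ 2) / 2) * f (hinv s))
        (-(s * (C * Real.exp (-(s ^ 2) / 2) * f (hinv s))) + C * f1 (hinv s)) (Ici s₀) s := by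
    intro s hs
    have hE : HasDerivWithinAt (fun s : ℝ => -(s ^ 2) / 2)
        (-(2 * s ^ 1 * 1) / 2) (Ici s₀) s :=
      (((hasDerivWithinAt_id s (Ici s₀)).pow 2).neg).div_const 2
    have hE2 := hE.exp.const_mul C
    have hF : HasDerivWithinAt (fun s => f (hinv s))
        (f1 (hinv s) * (Real.exp (-(s ^ 2) / 2))⁻¹) (Ici s₀) s :=
      (hfd (hinv s) (hinv_mem s hs)).comp s (hinvd s hs) hmapsTo
    have hM := hE2.mul hF
    refine hM.congr_deriv ?_
    obtain ⟨E, hEpos, hEeq⟩ : ∃ E : ℝ, 0 < E ∧ Real.exp (-(s ^ 2) / 2) = E :=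
      ⟨Real.exp (-(s ^ 2) / 2), hpos _, rfl⟩
    rw [hEeq]
    field_simp
  have part2 : ∀ s ∈ Ici s₀, v2 s + s * v1 s - C * v s = 0 := by
    intro s hs
    have hEqOn : EqOn v1 (fun s => C * Real.exp (-(s ^ 2) / 2) * f (hinv s)) (Ici s₀) :=
      fun x hx => hv1eq x hx
    have hv2s : v2 s = -(s * (C * Real.exp (-(s ^ 2) / 2) * f (hinv s))) + C * f1 (hinv s) := by
      rw [hv2, derivWithin_congr hEqOn (hEqOn hs)]
      exact (hwd s hs).derivWithin (V s hs)
    rw [hv2s, hv1eq s hs, hv]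
    ring
  have hs₀mem : s₀ ∈ Ici s₀ := self_mem_Ici
  have hvs₀ : v s₀ = 0 := by rw [hv]; simp only [hinv0]; exact f'0
  have hv1s₀ : v1 s₀ = C * Real.exp (-(s₀ ^ 2) / 2) := by
    rw [hv1eq s₀ hs₀mem, hinv0, f0, mul_one]
  refine ⟨part1, part2, hvs₀, hv1s₀, ?_⟩
  rw [hv1s₀]
  positivity
end
end

section
/- Let s₀ > 0 and 0 < C < 1 be real numbers, and let v : [s₀,∞) → ℝ be a smooth function satisfying v''(s) + s·v'(s) − C·v(s) = 0 for all s ≥ s₀, with v(s₀) = 0 and v'(s₀) > 0. Then v'(s) > 0 for all s ≥ s₀, and lim_{s→∞} v(s) = ∞. -/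
open Set Filter

noncomputable section

private lemma mono_aux {D : Set ℝ} (hD : Convex ℝ D) {f : ℝ → ℝ} (hc : ContinuousOn f D)
    (hf : ∀ x ∈ interior D, ∃ f', HasDerivAt f f' x ∧ 0 ≤ f') : MonotoneOn f D := by
  apply monotoneOn_of_deriv_nonneg hD hc
  · intro x hx
    obtain ⟨f', h, _⟩ := hf x hx
    exact h.differentiableAt.differentiableWithinAt
  · intro x hx
    obtain ⟨f', h, h0⟩ := hf x hx
    rw [h.deriv]; exact h0

private lemma exp_sq_deriv (x : ℝ) :
    HasDerivAt (fun s : ℝ => Real.exp (s ^ 2 / 2)) (x * Real.exp (x ^ 2 / 2)) x := by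
  have h1 : HasDerivAt (fun s : ℝ => s ^ 2 / 2) (2 * x ^ 1 / 2) x :=
    (hasDerivAt_pow 2 x).div_const 2
  have := h1.exp
  convert this using 1
  simp [pow_one]; ring

/-- If `v` is a smooth solution on `[s₀,∞)` of `v'' + s v' - C v = 0` with
`v s₀ = 0` and `v' s₀ > 0`, where `s₀ > 0` and `0 < C < 1`, then `v' > 0` on
`[s₀,∞)` and `v(s) → ∞` as `s → ∞`. -/
theorem stmt_10 (s₀ C : ℝ) (hs₀ : 0 < s₀) (hC : 0 < C) (hC' : C < 1)
    (v : ℝ → ℝ) (hv : ContDiffOn ℝ (⊤ : ℕ∞) v (Ici s₀))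
    (v1 v2 : ℝ → ℝ)
    (hv1 : v1 = derivWithin v (Ici s₀))
    (hv2 : v2 = derivWithin v1 (Ici s₀))
    (ode : ∀ s ∈ Ici s₀, v2 s + s * v1 s - C * v s = 0)
    (hinit : v s₀ = 0) (hinit' : 0 < v1 s₀) :
    (∀ s ∈ Ici s₀, 0 < v1 s) ∧ Tendsto v atTop atTop := by
  have hU : UniqueDiffOn ℝ (Ici s₀) := uniqueDiffOn_Ici s₀
  have hv1c : ContDiffOn ℝ (⊤ : ℕ∞) v1 (Ici s₀) := by
    rw [hv1]; exact hv.derivWithin hU (by simp)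
  have hcv : ContinuousOn v (Ici s₀) := hv.continuousOn
  have hcv1 : ContinuousOn v1 (Ici s₀) := hv1c.continuousOn
  -- derivatives at interior points
  have hder1' : ∀ x, s₀ < x → HasDerivAt v (v1 x) x := by
    intro x hx
    have hd : DifferentiableWithinAt ℝ v (Ici s₀) x :=
      (hv.differentiableOn (by simp)) x (le_of_lt hx)
    have := hd.hasDerivWithinAt.hasDerivAt (Ici_mem_nhds hx)
    rwa [hv1]
  have hder2' : ∀ x, s₀ < x → HasDerivAt v1 (v2 x) x := by
    intro x hx
    have hd : DifferentiableWithinAt ℝ v1 (Ici s₀) x :=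
      (hv1c.differentiableOn (by simp)) x (le_of_lt hx)
    have := hd.hasDerivWithinAt.hasDerivAt (Ici_mem_nhds hx)
    rwa [hv2]
  -- derivative of w = exp(s^2/2) * v1
  have hWder : ∀ x, s₀ < x →
      HasDerivAt (fun s => Real.exp (s ^ 2 / 2) * v1 s) (C * Real.exp (x ^ 2 / 2) * v x) x := by
    intro x hx
    have h := (exp_sq_deriv x).mul (hder2' x hx)
    refine h.congr_deriv ?_
    have hode : v2 x = C * v x - x * v1 x := by linarith [ode x (le_of_lt hx)]
    rw [hode]; ring
  have hcw : ContinuousOn (fun s => Real.exp (s ^ 2 / 2) * v1 s) (Ici s₀) :=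
    ((Real.continuous_exp.comp ((continuous_pow 2).div_const 2)).continuousOn).mul hcv1
  -- Part A: positivity of v1
  have key : ∀ s ∈ Ici s₀, 0 < v1 s := by
    by_contra hcon
    push_neg at hcon
    obtain ⟨t, htmem, ht⟩ := hcon
    set S : Set ℝ := Ici s₀ ∩ v1 ⁻¹' (Iic 0) with hS
    have hSne : S.Nonempty := ⟨t, htmem, ht⟩
    have hSbdd : BddBelow S := ⟨s₀, fun x hx => hx.1⟩
    have hSclosed : IsClosed S :=
      hcv1.preimage_isClosed_of_isClosed isClosed_Ici isClosed_Iic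
    set s₁ := sInf S with hs₁def
    have hs₁S : s₁ ∈ S := hSclosed.csInf_mem hSne hSbdd
    have hs₁0 : s₀ < s₁ := by
      rcases lt_or_eq_of_le (mem_Ici.1 hs₁S.1) with h | h
      · exact h
      · exfalso; have := hs₁S.2; rw [← h] at this; simp at this; linarith
    have hpos : ∀ s ∈ Ico s₀ s₁, 0 < v1 s := by
      intro s hs
      by_contra hle
      push_neg at hle
      exact absurd (csInf_le hSbdd ⟨hs.1, hle⟩) (not_le.2 hs.2)
    -- v is monotone on [s₀, s₁]
    have hvmono : MonotoneOn v (Icc s₀ s₁) := by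
      apply mono_aux (convex_Icc _ _) (hcv.mono Icc_subset_Ici_self)
      intro x hx
      rw [interior_Icc] at hx
      exact ⟨v1 x, hder1' x hx.1, (hpos x ⟨hx.1.le, hx.2⟩).le⟩
    have hvnn : ∀ s ∈ Icc s₀ s₁, 0 ≤ v s := by
      intro s hs
      have := hvmono ⟨le_refl s₀, hs₁0.le⟩ hs hs.1
      rwa [hinit] at this
    have hwmono : MonotoneOn (fun s => Real.exp (s ^ 2 / 2) * v1 s) (Icc s₀ s₁) := by
      apply mono_aux (convex_Icc _ _) (hcw.mono Icc_subset_Ici_self)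
      intro x hx
      rw [interior_Icc] at hx
      refine ⟨_, hWder x hx.1, ?_⟩
      have := hvnn x ⟨hx.1.le, hx.2.le⟩
      positivity
    have h1 := hwmono (left_mem_Icc.2 hs₁0.le) (right_mem_Icc.2 hs₁0.le) hs₁0.le
    have h2 : Real.exp (s₁ ^ 2 / 2) * v1 s₁ ≤ 0 := by
      have := hs₁S.2
      simp only [mem_preimage, mem_Iic] at this
      nlinarith [Real.exp_pos (s₁ ^ 2 / 2)]
    nlinarith [Real.exp_pos (s₀ ^ 2 / 2), Real.exp_pos (s₁ ^ 2 / 2)]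
  refine ⟨key, ?_⟩
  -- Part B: v → ∞
  have hvSM : StrictMonoOn v (Ici s₀) := by
    apply strictMonoOn_of_deriv_pos (convex_Ici s₀) hcv
    intro x hx
    rw [interior_Ici] at hx
    rw [(hder1' x hx).deriv]
    exact key x (mem_Ioi.1 hx).le
  set s₂ := s₀ + 1 with hs₂def
  have hs₂1 : 1 < s₂ := by linarith
  have hs₂mem : s₂ ∈ Ici s₀ := by
    simp only [hs₂def, mem_Ici]
    linarith
  have hvs₂ : 0 < v s₂ := by
    have := hvSM (self_mem_Ici) hs₂mem (by linarith)
    rwa [hinit] at this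
  set m := C * v s₂ with hmdef
  have hm : 0 < m := mul_pos hC hvs₂
  have hvge : ∀ x, s₂ ≤ x → v s₂ ≤ v x := by
    intro x hx
    rcases eq_or_lt_of_le hx with h | h
    · rw [h]
    · exact le_of_lt (hvSM hs₂mem (le_trans (by linarith : s₀ ≤ s₂) hx) h)
  -- F = exp(s^2/2) * (v1 s - m/s) is monotone on [s₂, ∞)
  have hmsder : ∀ x : ℝ, 0 < x → HasDerivAt (fun s : ℝ => m / s) (-(m / x ^ 2)) x := by
    intro x hx
    have h := (hasDerivAt_inv (ne_of_gt hx)).const_mul m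
    have h2 : HasDerivAt (fun s : ℝ => m / s) (m * -(x ^ 2)⁻¹) x := by
      simpa [div_eq_mul_inv] using h
    convert h2 using 1
    field_simp
  have hFder : ∀ x, s₂ < x →
      HasDerivAt (fun s => Real.exp (s ^ 2 / 2) * (v1 s - m / s))
        (x * Real.exp (x ^ 2 / 2) * (v1 x - m / x)
          + Real.exp (x ^ 2 / 2) * (v2 x - -(m / x ^ 2))) x := by
    intro x hx
    exact (exp_sq_deriv x).mul ((hder2' x (by linarith)).sub (hmsder x (by linarith)))
  have hFmono : MonotoneOn (fun s => Real.exp (s ^ 2 / 2) * (v1 s - m / s)) (Ici s₂) := by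
    apply mono_aux (convex_Ici s₂)
    · apply (((Real.continuous_exp.comp ((continuous_pow 2).div_const 2)).continuousOn)).mul
      apply ContinuousOn.sub (hcv1.mono (Ici_subset_Ici.2 (by linarith)))
      apply ContinuousOn.div continuousOn_const continuousOn_id
      intro x hx
      have hx2 : s₂ ≤ x := hx
      simp only [id]
      intro h; rw [h] at hx2; linarith
    · intro x hx
      rw [interior_Ici] at hx
      have hx' : s₂ < x := hx
      refine ⟨_, hFder x hx', ?_⟩
      have hxpos : (0:ℝ) < x := by linarith
      have hode : v2 x = C * v x - x * v1 x := by
        linarith [ode x (le_of_lt (by linarith : s₀ < x))]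
      have hcv2x : m ≤ C * v x := by
        have := hvge x hx'.le
        rw [hmdef]
        nlinarith
      rw [hode]
      have hE := Real.exp_pos (x ^ 2 / 2)
      have h1 : x * Real.exp (x ^ 2 / 2) * (v1 x - m / x)
          + Real.exp (x ^ 2 / 2) * (C * v x - x * v1 x - -(m / x ^ 2))
          = Real.exp (x ^ 2 / 2) * (C * v x - m + m / x ^ 2) := by
        field_simp
        ring
      rw [h1]
      have : (0:ℝ) ≤ m / x ^ 2 := by positivity
      nlinarith
  set K := Real.exp (s₂ ^ 2 / 2) * (v1 s₂ - m / s₂) with hKdef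
  have hFge : ∀ x, s₂ ≤ x → K ≤ Real.exp (x ^ 2 / 2) * (v1 x - m / x) :=
    fun x hx => hFmono (self_mem_Ici) hx hx
  -- pointwise lower bound on v1
  have hv1lb : ∀ x, s₂ ≤ x → m / x - |K| * Real.exp (-(x / 2)) ≤ v1 x := by
    intro x hx
    have hx1 : (1:ℝ) < x := lt_of_lt_of_le hs₂1 hx
    have hE := Real.exp_pos (x ^ 2 / 2)
    have h1 : K * (Real.exp (x ^ 2 / 2))⁻¹ ≤ v1 x - m / x := by
      have h2 := mul_le_mul_of_nonneg_right (hFge x hx) (inv_nonneg.2 hE.le)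
      calc K * (Real.exp (x ^ 2 / 2))⁻¹
          ≤ Real.exp (x ^ 2 / 2) * (v1 x - m / x) * (Real.exp (x ^ 2 / 2))⁻¹ := h2
        _ = v1 x - m / x := by field_simp
    have h3 : (Real.exp (x ^ 2 / 2))⁻¹ = Real.exp (-(x ^ 2 / 2)) := by
      rw [Real.exp_neg]
    have h4 : Real.exp (-(x ^ 2 / 2)) ≤ Real.exp (-(x / 2)) := by
      apply Real.exp_le_exp.2
      nlinarith
    have h5 : -|K| * Real.exp (-(x / 2)) ≤ K * Real.exp (-(x ^ 2 / 2)) := by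
      have hn := neg_abs_le K
      have e1 := Real.exp_pos (-(x ^ 2 / 2))
      have e2 := mul_nonneg (abs_nonneg K) (sub_nonneg.2 h4)
      have e3 := mul_nonneg (by linarith : (0:ℝ) ≤ K + |K|) e1.le
      nlinarith
    rw [h3] at h1
    linarith
  -- G = v - (m log s + 2|K| exp(-s/2)) is monotone on [s₂,∞)
  have hGder : ∀ x, s₂ < x →
      HasDerivAt (fun s => v s - (m * Real.log s + 2 * |K| * Real.exp (-(s / 2))))
        (v1 x - (m * x⁻¹ + 2 * |K| * (Real.exp (-(x / 2)) * -(1 / 2)))) x := by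
    intro x hx
    have hx0 : (0:ℝ) < x := by linarith
    have hlog : HasDerivAt (fun s : ℝ => m * Real.log s) (m * x⁻¹) x :=
      (Real.hasDerivAt_log (ne_of_gt hx0)).const_mul m
    have hexp : HasDerivAt (fun s : ℝ => 2 * |K| * Real.exp (-(s / 2)))
        (2 * |K| * (Real.exp (-(x / 2)) * -(1 / 2))) x := by
      have h1 : HasDerivAt (fun s : ℝ => -(s / 2)) (-(1 / 2)) x := by
        exact ((hasDerivAt_id x).div_const 2).neg.congr_deriv (by norm_num)
      exact (h1.exp).const_mul (2 * |K|)
    exact (hder1' x (by linarith)).sub (hlog.add hexp)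
  have hGmono : MonotoneOn
      (fun s => v s - (m * Real.log s + 2 * |K| * Real.exp (-(s / 2)))) (Ici s₂) := by
    apply mono_aux (convex_Ici s₂)
    · apply ContinuousOn.sub (hcv.mono (Ici_subset_Ici.2 (by linarith)))
      apply ContinuousOn.add
      · apply ContinuousOn.mul continuousOn_const
        intro x hx
        exact (Real.continuousAt_log (by have hx2 : s₂ ≤ x := hx; intro h; rw [h] at hx2; linarith)).continuousWithinAt
      · exact (continuous_const.mul
          (Real.continuous_exp.comp (continuous_id.div_const 2).neg)).continuousOn
    · intro x hx
      rw [interior_Ici] at hx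
      have hx' : s₂ < x := hx
      refine ⟨_, hGder x hx', ?_⟩
      have h1 := hv1lb x hx'.le
      have hx0 : (0:ℝ) < x := by linarith
      have h2 : m * x⁻¹ = m / x := by rw [div_eq_mul_inv]
      have h3 : 2 * |K| * (Real.exp (-(x / 2)) * -(1 / 2)) = -(|K| * Real.exp (-(x / 2))) := by
        ring
      rw [h2, h3]
      linarith
  have hvlb : ∀ x, s₂ ≤ x →
      m * Real.log x + (v s₂ - (m * Real.log s₂ + 2 * |K| * Real.exp (-(s₂ / 2)))) ≤ v x := by
    intro x hx
    have h1 := hGmono self_mem_Ici hx hx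
    simp only at h1
    have h2 : (0:ℝ) ≤ 2 * |K| * Real.exp (-(x / 2)) := by positivity
    linarith
  have hlim : Tendsto
      (fun x => m * Real.log x + (v s₂ - (m * Real.log s₂ + 2 * |K| * Real.exp (-(s₂ / 2)))))
      atTop atTop :=
    tendsto_atTop_add_const_right atTop _ (Real.tendsto_log_atTop.const_mul_atTop hm)
  exact tendsto_atTop_mono' atTop ((eventually_ge_atTop s₂).mono fun x hx => hvlb x hx) hlim
end
end

section
/- The function y : [s₀,∞) → ℝ defined by y(s) = exp(−s²/2)·f_C(h₀⁻¹(s)) satisfies y''(s) = −s·y'(s) + (C−1)·y(s) for all s ≥ s₀, with y(s₀) = exp(−s₀²/2) > 0 and y'(s₀) = −s₀·exp(−s₀²/2) < 0. -/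
open Set Filter Topology

noncomputable section

/-- `y(s) = exp (-s^2/2) · f_C(h₀⁻¹(s))` satisfies `y'' = -s y' + (C-1) y` on
`[s₀,∞)` with `y s₀ = exp (-s₀^2/2) > 0` and `y' s₀ = -s₀ exp (-s₀^2/2) < 0`. -/
theorem stmt_11 (lam : ℝ) (hlam : 0 < lam) (h : ℝ → ℝ) (hh : IsH0Sol lam h)
    (C : ℝ) (hC : 0 < C) (hC' : C < 1) (f : ℝ → ℝ) (hf : IsFCSol C h f)
    (s₀ : ℝ) (hs₀ : s₀ = h 0)
    -- `hinv` is the inverse of `h₀ : [0,∞) → [s₀,∞)`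
    (hinv : ℝ → ℝ)
    (hinv_left : ∀ t ∈ Ici (0:ℝ), hinv (h t) = t)
    (hinv_mem : ∀ s ∈ Ici s₀, hinv s ∈ Ici (0:ℝ))
    (hinv_right : ∀ s ∈ Ici s₀, h (hinv s) = s)
    (y y1 y2 : ℝ → ℝ)
    (hy : y = fun s => Real.exp (-(s ^ 2) / 2) * f (hinv s))
    (hy1 : y1 = derivWithin y (Ici s₀))
    (hy2 : y2 = derivWithin y1 (Ici s₀)) :
    (∀ s ∈ Ici s₀, y2 s = -s * y1 s + (C - 1) * y s) ∧
    y s₀ = Real.exp (-(s₀ ^ 2) / 2) ∧ 0 < y s₀ ∧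
    y1 s₀ = -s₀ * Real.exp (-(s₀ ^ 2) / 2) ∧ y1 s₀ < 0 := by
  obtain ⟨hsmooth, hode, hval⟩ := hh
  obtain ⟨fsmooth, fode, f0, f'0⟩ := hf
  have hUD : UniqueDiffOn ℝ (Ici (0:ℝ)) := uniqueDiffOn_Ici 0
  have hUD' : UniqueDiffOn ℝ (Ici s₀) := uniqueDiffOn_Ici s₀
  have hdiff : DifferentiableOn ℝ h (Ici 0) := hsmooth.differentiableOn (by simp)
  have hHD : ∀ t ∈ Ici (0:ℝ),
      HasDerivWithinAt h (Real.exp (-(h t ^ 2) / 2)) (Ici 0) t := by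
    intro t ht
    have := (hdiff t ht).hasDerivWithinAt
    rwa [hode t ht] at this
  have hcont : ContinuousOn h (Ici 0) := hsmooth.continuousOn
  have hmono : StrictMonoOn h (Ici 0) := by
    apply strictMonoOn_of_deriv_pos (convex_Ici 0) hcont
    intro t ht
    rw [interior_Ici] at ht
    have h1 : derivWithin h (Ici 0) t = deriv h t :=
      derivWithin_of_mem_nhds (Ici_mem_nhds ht)
    rw [← h1, hode t (mem_Ici.mpr (le_of_lt ht))]
    positivity
  have hinv0 : hinv s₀ = 0 := by rw [hs₀, hinv_left 0 self_mem_Ici]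
  have hinv_mono : StrictMonoOn hinv (Ici s₀) := by
    intro a ha b hb hab
    by_contra hle
    push_neg at hle
    have := hmono.monotoneOn (hinv_mem b hb) (hinv_mem a ha) hle
    rw [hinv_right a ha, hinv_right b hb] at this
    exact absurd hab (not_lt.mpr this)
  have hmaps : ∀ t ∈ Ici (0:ℝ), h t ∈ Ici s₀ := by
    intro t ht
    rw [hs₀]
    exact hmono.monotoneOn self_mem_Ici ht ht
  have hinv_cont : ∀ s ∈ Ici s₀, ContinuousWithinAt hinv (Ici s₀) s := by
    intro s hs
    have hmemr : Ici s₀ ∈ 𝓝[≥] s :=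
      mem_of_superset self_mem_nhdsWithin (Ici_subset_Ici.mpr hs)
    have hr : ContinuousWithinAt hinv (Ici s) s := by
      apply hinv_mono.continuousWithinAt_right_of_exists_between hmemr
      intro b hb
      have hb0 : b ∈ Ici (0:ℝ) := le_trans (hinv_mem s hs) (le_of_lt hb)
      exact ⟨h b, hmaps b hb0, by rw [hinv_left b hb0]; exact ⟨hb, le_rfl⟩⟩
    rcases eq_or_lt_of_le (mem_Ici.mp hs) with rfl | hlt
    · exact hr
    · have hinvpos : 0 < hinv s := by
        rw [← hinv0]; exact hinv_mono self_mem_Ici hs hlt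
      have hmeml : Ici s₀ ∈ 𝓝[≤] s :=
        mem_nhdsWithin_of_mem_nhds (Ici_mem_nhds hlt)
      have hl : ContinuousWithinAt hinv (Iic s) s := by
        apply hinv_mono.continuousWithinAt_left_of_exists_between hmeml
        intro b hb
        have hmb0 : max b 0 ∈ Ici (0:ℝ) := mem_Ici.mpr (le_max_right _ _)
        refine ⟨h (max b 0), hmaps _ hmb0, ?_⟩
        rw [hinv_left _ hmb0]
        exact ⟨le_max_left _ _, max_lt hb hinvpos⟩
      exact (hl.union hr).mono (fun x _ => (le_total x s).imp id id)
  -- derivative of the inverse function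
  have hinvHD : ∀ s ∈ Ici s₀,
      HasDerivWithinAt hinv (Real.exp (s ^ 2 / 2)) (Ici s₀) s := by
    intro s hs
    have ht : hinv s ∈ Ici (0:ℝ) := hinv_mem s hs
    have hts : h (hinv s) = s := hinv_right s hs
    have hd : HasDerivWithinAt h (Real.exp (-(s ^ 2) / 2)) (Ici 0) (hinv s) := by
      have := hHD (hinv s) ht
      rwa [hts] at this
    have hdne : Real.exp (-(s ^ 2) / 2) ≠ 0 := (Real.exp_pos _).ne'
    rw [hasDerivWithinAt_iff_tendsto_slope]
    have hslope : Tendsto (slope h (hinv s)) (𝓝[Ici 0 \ {hinv s}] (hinv s))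
        (𝓝 (Real.exp (-(s ^ 2) / 2))) := hasDerivWithinAt_iff_tendsto_slope.mp hd
    have hmapsto : Tendsto hinv (𝓝[Ici s₀ \ {s}] s) (𝓝[Ici 0 \ {hinv s}] (hinv s)) := by
      apply tendsto_nhdsWithin_of_tendsto_nhds_of_eventually_within
      · exact ((hinv_cont s hs).mono diff_subset).tendsto
      · filter_upwards [self_mem_nhdsWithin] with x hx
        refine ⟨hinv_mem x hx.1, ?_⟩
        simp only [mem_singleton_iff]
        intro hcontra
        apply hx.2
        have hxx : h (hinv x) = h (hinv s) := by rw [hcontra]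
        rw [hinv_right x hx.1, hts] at hxx
        exact hxx
    have hlim := (hslope.comp hmapsto).inv₀ hdne
    have hcong : ∀ᶠ x in 𝓝[Ici s₀ \ {s}] s,
        (((slope h (hinv s)) ∘ hinv) x)⁻¹ = slope hinv s x := by
      filter_upwards [self_mem_nhdsWithin] with x hx
      simp only [Function.comp_apply, slope_def_field, inv_div]
      rw [hinv_right x hx.1, hts]
    have hfin := hlim.congr' hcong
    have hval' : (Real.exp (-(s ^ 2) / 2))⁻¹ = Real.exp (s ^ 2 / 2) := by
      rw [← Real.exp_neg]
      ring_nf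
    rwa [hval'] at hfin
  -- derivatives of f
  have fdiff : DifferentiableOn ℝ f (Ici 0) := fsmooth.differentiableOn (by simp)
  have f'smooth : ContDiffOn ℝ (⊤ : ℕ∞) (derivWithin f (Ici 0)) (Ici 0) :=
    fsmooth.derivWithin hUD (by simp)
  have f'diff : DifferentiableOn ℝ (derivWithin f (Ici 0)) (Ici 0) :=
    f'smooth.differentiableOn (by simp)
  have fHD : ∀ t ∈ Ici (0:ℝ),
      HasDerivWithinAt f (derivWithin f (Ici 0) t) (Ici 0) t :=
    fun t ht => (fdiff t ht).hasDerivWithinAt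
  have f'HD : ∀ t ∈ Ici (0:ℝ),
      HasDerivWithinAt (derivWithin f (Ici 0))
        (C * Real.exp (-(h t ^ 2)) * f t) (Ici 0) t := by
    intro t ht
    have := (f'diff t ht).hasDerivWithinAt
    rwa [fode t ht] at this
  have hmapsTo : MapsTo hinv (Ici s₀) (Ici 0) := fun x hx => hinv_mem x hx
  set Y1 : ℝ → ℝ := fun s => -s * y s + derivWithin f (Ici 0) (hinv s) with hY1def
  have yHD : ∀ s ∈ Ici s₀, HasDerivWithinAt y (Y1 s) (Ici s₀) s := by
    intro s hs
    have hFc : HasDerivWithinAt (fun x => f (hinv x))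
        (derivWithin f (Ici 0) (hinv s) * Real.exp (s ^ 2 / 2)) (Ici s₀) s :=
      (fHD (hinv s) (hinv_mem s hs)).comp s (hinvHD s hs) hmapsTo
    have hE : HasDerivWithinAt (fun x : ℝ => Real.exp (-(x ^ 2) / 2))
        (Real.exp (-(s ^ 2) / 2) * (-s)) (Ici s₀) s := by
      have h1 : HasDerivAt (fun x : ℝ => -(x ^ 2) / 2) (-s) s := by
        have h2 := ((hasDerivAt_pow 2 s).neg).div_const 2
        convert h2 using 1
        · rfl
        · rfl
        · rfl
        simp
        ring
      exact h1.exp.hasDerivWithinAt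
    have hprod := hE.mul hFc
    have hyfun : y = fun x => Real.exp (-(x ^ 2) / 2) * f (hinv x) := hy
    rw [hyfun]
    convert hprod using 1
    · rfl
    · rfl
    · rfl
    have key : Real.exp (-(s ^ 2) / 2) * Real.exp (s ^ 2 / 2) = 1 := by
      rw [← Real.exp_add, show -(s ^ 2) / 2 + s ^ 2 / 2 = 0 by ring, Real.exp_zero]
    simp only [hY1def, hyfun]
    rw [show Real.exp (-(s ^ 2) / 2) * (derivWithin f (Ici 0) (hinv s) * Real.exp (s ^ 2 / 2))
        = derivWithin f (Ici 0) (hinv s) * (Real.exp (-(s ^ 2) / 2) * Real.exp (s ^ 2 / 2)) by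
      ring, key, mul_one]
    ring
  have y1eq : ∀ s ∈ Ici s₀, y1 s = Y1 s := by
    intro s hs
    rw [hy1]
    exact (yHD s hs).derivWithin (hUD' s hs)
  have Y1HD : ∀ s ∈ Ici s₀,
      HasDerivWithinAt Y1 (-(y s) + -s * Y1 s + C * y s) (Ici s₀) s := by
    intro s hs
    have h1 : HasDerivWithinAt (fun x => -x * y x) (-1 * y s + -s * Y1 s) (Ici s₀) s :=
      ((hasDerivAt_id s).neg.hasDerivWithinAt).mul (yHD s hs)
    have h2 : HasDerivWithinAt (fun x => derivWithin f (Ici 0) (hinv x))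
        (C * Real.exp (-(s ^ 2)) * f (hinv s) * Real.exp (s ^ 2 / 2)) (Ici s₀) s := by
      have h3 := (f'HD (hinv s) (hinv_mem s hs)).comp s (hinvHD s hs) hmapsTo
      rw [hinv_right s hs] at h3
      exact h3
    have h4 := h1.add h2
    convert h4 using 1
    · rfl
    · rfl
    · rfl
    have key : Real.exp (-(s ^ 2)) * Real.exp (s ^ 2 / 2) = Real.exp (-(s ^ 2) / 2) := by
      rw [← Real.exp_add, show -(s ^ 2) + s ^ 2 / 2 = -(s ^ 2) / 2 by ring]
    simp only [hy]
    rw [show C * Real.exp (-(s ^ 2)) * f (hinv s) * Real.exp (s ^ 2 / 2)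
        = C * f (hinv s) * (Real.exp (-(s ^ 2)) * Real.exp (s ^ 2 / 2)) by ring, key]
    ring
  have hys₀ : y s₀ = Real.exp (-(s₀ ^ 2) / 2) := by
    rw [hy]
    simp [hinv0, f0]
  have hy1s₀ : y1 s₀ = -s₀ * Real.exp (-(s₀ ^ 2) / 2) := by
    rw [y1eq s₀ self_mem_Ici, hY1def]
    simp only [hinv0, f'0, add_zero, hys₀]
  have hs₀pos : 0 < s₀ := by
    rw [hs₀, hval]
    apply Real.sqrt_pos.mpr
    have hminpos : 0 < min lam (1/2:ℝ) := lt_min hlam (by norm_num)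
    have hmin1 : min lam (1/2:ℝ) < 1 :=
      lt_of_le_of_lt (min_le_right _ _) (by norm_num)
    have := Real.log_neg hminpos hmin1
    linarith
  refine ⟨?_, hys₀, by rw [hys₀]; exact Real.exp_pos _, hy1s₀, ?_⟩
  · intro s hs
    have hder : derivWithin Y1 (Ici s₀) s = -(y s) + -s * Y1 s + C * y s :=
      (Y1HD s hs).derivWithin (hUD' s hs)
    have h5 : y2 s = derivWithin Y1 (Ici s₀) s := by
      rw [hy2]
      exact derivWithin_congr y1eq (y1eq s hs)
    rw [h5, hder, y1eq s hs]
    ring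
  · rw [hy1s₀]
    exact mul_neg_of_neg_of_pos (neg_lt_zero.mpr hs₀pos) (Real.exp_pos _)
end
end

section
/- Let s₀ > 0 and 0 < C < 1 be real numbers, and let y : [s₀,∞) → ℝ be a smooth function satisfying y''(s) = −s·y'(s) + (C−1)·y(s) for all s ≥ s₀, with y(s) > 0 for all s ≥ s₀ and y'(s₀) < 0. Then y'(s) < 0 for all s ≥ s₀, and lim_{s→∞} y(s) = 0. -/
open Set Filter

noncomputable section

/-- Auxiliary: antitonicity on `Ici a` from `HasDerivAt` with nonpositive value. -/
lemma anti_aux {a : ℝ} {f f' : ℝ → ℝ} (hc : ContinuousOn f (Ici a))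
    (hd : ∀ t ∈ Ioi a, HasDerivAt f (f' t) t) (hn : ∀ t ∈ Ioi a, f' t ≤ 0) :
    AntitoneOn f (Ici a) := by
  apply antitoneOn_of_deriv_nonpos (convex_Ici a) hc
  · intro t ht
    rw [interior_Ici] at ht
    exact (hd t ht).differentiableAt.differentiableWithinAt
  · intro t ht
    rw [interior_Ici] at ht
    rw [(hd t ht).deriv]
    exact hn t ht

/-- If `y` is a smooth positive solution on `[s₀,∞)` of `y'' = -s y' + (C-1) y`
with `y' s₀ < 0`, where `s₀ > 0` and `0 < C < 1`, then `y' < 0` on `[s₀,∞)` and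
`y(s) → 0` as `s → ∞`. -/
theorem stmt_12 (s₀ C : ℝ) (hs₀ : 0 < s₀) (hC : 0 < C) (hC' : C < 1)
    (y : ℝ → ℝ) (hy : ContDiffOn ℝ (⊤ : ℕ∞) y (Ici s₀))
    (y1 y2 : ℝ → ℝ)
    (hy1 : y1 = derivWithin y (Ici s₀))
    (hy2 : y2 = derivWithin y1 (Ici s₀))
    (ode : ∀ s ∈ Ici s₀, y2 s = -s * y1 s + (C - 1) * y s)
    (hpos : ∀ s ∈ Ici s₀, 0 < y s) (hinit' : y1 s₀ < 0) :
    (∀ s ∈ Ici s₀, y1 s < 0) ∧ Tendsto y atTop (nhds 0) := by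
  have hy1cd : ContDiffOn ℝ (⊤ : ℕ∞) y1 (Ici s₀) := by
    rw [hy1]; exact hy.derivWithin (uniqueDiffOn_Ici s₀) (by simp)
  have hy2cd : ContDiffOn ℝ (⊤ : ℕ∞) y2 (Ici s₀) := by
    rw [hy2]; exact hy1cd.derivWithin (uniqueDiffOn_Ici s₀) (by simp)
  have hdy : ∀ t ∈ Ioi s₀, HasDerivAt y (y1 t) t := by
    intro t ht
    have hn : Ici s₀ ∈ nhds t := Ici_mem_nhds ht
    have hd : DifferentiableAt ℝ y t :=
      ((hy.differentiableOn (by simp)) t (mem_Ici.mpr (le_of_lt ht))).differentiableAt hn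
    have := hd.hasDerivAt
    rwa [hy1, derivWithin_of_mem_nhds hn]
  have hdy1 : ∀ t ∈ Ioi s₀, HasDerivAt y1 (y2 t) t := by
    intro t ht
    have hn : Ici s₀ ∈ nhds t := Ici_mem_nhds ht
    have hd : DifferentiableAt ℝ y1 t :=
      ((hy1cd.differentiableOn (by simp)) t (mem_Ici.mpr (le_of_lt ht))).differentiableAt hn
    have := hd.hasDerivAt
    rwa [hy2, derivWithin_of_mem_nhds hn]
  -- the function g s = exp(s²/2) * y1 s
  set g : ℝ → ℝ := fun s => Real.exp (s^2/2) * y1 s with hgdef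
  have hexpd : ∀ t : ℝ, HasDerivAt (fun s : ℝ => Real.exp (s^2/2)) (Real.exp (t^2/2) * t) t := by
    intro t
    have h0 : HasDerivAt (fun s : ℝ => s^2/2) t t := by
      simpa using (hasDerivAt_pow 2 t).div_const 2
    exact (Real.hasDerivAt_exp (t^2/2)).comp t h0
  have hgd : ∀ t ∈ Ioi s₀, HasDerivAt g (Real.exp (t^2/2) * ((C-1) * y t)) t := by
    intro t ht
    have h2 := (hexpd t).mul (hdy1 t ht)
    have h3 : Real.exp (t^2/2) * t * y1 t + Real.exp (t^2/2) * y2 t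
        = Real.exp (t^2/2) * ((C-1) * y t) := by
      rw [ode t (mem_Ici.mpr (le_of_lt ht))]; ring
    rw [h3] at h2
    exact h2
  have hgcont : ContinuousOn g (Ici s₀) :=
    ((Real.continuous_exp.comp ((continuous_pow 2).div_const 2)).continuousOn).mul
      hy1cd.continuousOn
  have hganti : AntitoneOn g (Ici s₀) := by
    refine anti_aux hgcont hgd ?_
    intro t ht
    exact (mul_neg_of_pos_of_neg (Real.exp_pos _)
      (mul_neg_of_neg_of_pos (by linarith) (hpos t (mem_Ici.mpr (le_of_lt ht))))).le
  have hg0 : g s₀ < 0 := mul_neg_of_pos_of_neg (Real.exp_pos _) hinit'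
  have hneg : ∀ s ∈ Ici s₀, y1 s < 0 := by
    intro s hs
    have hgs : g s < 0 := lt_of_le_of_lt (hganti self_mem_Ici hs hs) hg0
    by_contra h'
    push_neg at h'
    have : 0 ≤ g s := mul_nonneg (Real.exp_pos _).le h'
    linarith
  -- y is antitone on Ici s₀
  have hyanti : AntitoneOn y (Ici s₀) := by
    refine anti_aux hy.continuousOn hdy ?_
    intro t ht
    exact (hneg t (mem_Ici.mpr (le_of_lt ht))).le
  -- limit L
  set z : ℝ → ℝ := fun s => y (max s s₀) with hzdef
  have hzanti : Antitone z := fun a b hab =>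
    hyanti (mem_Ici.mpr (le_max_right _ _)) (mem_Ici.mpr (le_max_right _ _)) (max_le_max hab le_rfl)
  have hzbdd : BddBelow (range z) := by
    refine ⟨0, ?_⟩
    rintro _ ⟨s, rfl⟩
    exact (hpos _ (mem_Ici.mpr (le_max_right _ _))).le
  set L := ⨅ s, z s with hLdef
  have hzt : Tendsto z atTop (nhds L) := tendsto_atTop_ciInf hzanti hzbdd
  have heq : y =ᶠ[atTop] z := by
    filter_upwards [eventually_ge_atTop s₀] with s hs
    simp [hzdef, max_eq_left hs]
  have hyt : Tendsto y atTop (nhds L) := hzt.congr' heq.symm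
  have hL0 : 0 ≤ L :=
    ge_of_tendsto hyt ((eventually_ge_atTop s₀).mono fun s hs => (hpos s hs).le)
  have hLle : ∀ s ∈ Ici s₀, L ≤ y s := by
    intro s hs
    have := ciInf_le hzbdd s
    simpa [hzdef, max_eq_left (mem_Ici.mp hs)] using this
  suffices hL : L = 0 by
    exact ⟨hneg, hL ▸ hyt⟩
  by_contra hLne
  have hL : 0 < L := lt_of_le_of_ne hL0 (Ne.symm hLne)
  have h1C : 0 < (1-C)*L := mul_pos (by linarith) hL
  -- the function φ
  set φ : ℝ → ℝ := fun s => g s + (1-C)*L*(Real.exp (s^2/2) / s) with hφdef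
  have hφd : ∀ t ∈ Ioi s₀,
      HasDerivAt φ (Real.exp (t^2/2) * ((C-1) * y t)
        + (1-C)*L*(Real.exp (t^2/2) * (1 - 1/t^2))) t := by
    intro t ht
    have ht0 : t ≠ 0 := by
      have : s₀ < t := ht
      linarith
    have hdiv : HasDerivAt (fun s : ℝ => Real.exp (s^2/2) / s)
        (Real.exp (t^2/2) * (1 - 1/t^2)) t := by
      have : HasDerivAt (fun s : ℝ => Real.exp (s^2/2) / s) ((Real.exp (t^2/2) * t * t - Real.exp (t^2/2) * 1) / t^2) t := (hexpd t).div (hasDerivAt_id t) ht0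
      convert this using 1
      field_simp
    exact (hgd t ht).add ((hdiv.const_mul ((1-C)*L)))
  have hφcont : ContinuousOn φ (Ici s₀) := by
    refine hgcont.add (ContinuousOn.mul continuousOn_const ?_)
    refine ContinuousOn.div
      ((Real.continuous_exp.comp ((continuous_pow 2).div_const 2)).continuousOn)
      continuousOn_id ?_
    intro s hs
    have : s₀ ≤ s := hs
    intro h0
    linarith
  have hφanti : AntitoneOn φ (Ici s₀) := by
    refine anti_aux hφcont hφd ?_
    intro t ht
    have ht' : s₀ < t := ht
    have hyL : L ≤ y t := hLle t (le_of_lt ht')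
    have ht2 : 0 < t^2 := pow_pos (by linarith) 2
    have hE : 0 < Real.exp (t^2/2) := Real.exp_pos _
    have key : (C-1) * y t + (1-C)*L*(1 - 1/t^2) ≤ 0 := by
      have h1 : (C-1) * y t + (1-C)*L*(1 - 1/t^2)
          = (1-C) * (L - y t) - (1-C)*L/t^2 := by
        field_simp
        ring
      rw [h1]
      have h2 : (1-C) * (L - y t) ≤ 0 :=
        mul_nonpos_of_nonneg_of_nonpos (by linarith) (by linarith)
      have h3 : 0 < (1-C)*L/t^2 := div_pos h1C ht2
      linarith
    nlinarith
  set M := φ s₀ with hMdef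
  have hφle : ∀ s ∈ Ici s₀, φ s ≤ M := fun s hs => hφanti self_mem_Ici hs hs
  -- derivative bound for y1
  have hy1bd : ∀ t ∈ Ioi s₀, y1 t + (1-C)*L/t ≤ |M| * Real.exp (-t^2/2) := by
    intro t ht
    have ht' : s₀ < t := ht
    have ht0 : t ≠ 0 := by linarith
    have hE : (0:ℝ) < Real.exp (t^2/2) := Real.exp_pos _
    have hE0 : Real.exp (t^2/2) ≠ 0 := hE.ne'
    have hφs := hφle t (le_of_lt ht')
    have hcalc : y1 t + (1-C)*L/t
        = (Real.exp (t^2/2) * y1 t + (1-C)*L*(Real.exp (t^2/2)/t)) * Real.exp (-t^2/2) := by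
      rw [show (-t^2/2 : ℝ) = -(t^2/2) by ring, Real.exp_neg]
      field_simp
    rw [hcalc]
    calc (Real.exp (t^2/2) * y1 t + (1-C)*L*(Real.exp (t^2/2)/t)) * Real.exp (-t^2/2)
        ≤ M * Real.exp (-t^2/2) :=
          mul_le_mul_of_nonneg_right hφs (Real.exp_pos _).le
      _ ≤ |M| * Real.exp (-t^2/2) :=
          mul_le_mul_of_nonneg_right (le_abs_self M) (Real.exp_pos _).le
  -- the function ψ on [s₁, ∞), s₁ = max s₀ 2
  set s₁ := max s₀ 2 with hs₁def
  set ψ : ℝ → ℝ := fun s => y s + (1-C)*L*Real.log s + |M| * Real.exp (-s) with hψdef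
  have hψd : ∀ t ∈ Ioi s₁,
      HasDerivAt ψ (y1 t + (1-C)*L*(1/t) + |M| * (-Real.exp (-t))) t := by
    intro t ht
    have ht' : s₁ < t := ht
    have ht₀ : s₀ < t := lt_of_le_of_lt (le_max_left _ _) ht'
    have ht0 : t ≠ 0 := by
      have : (2:ℝ) ≤ s₁ := le_max_right _ _
      linarith
    have h1 := hdy t ht₀
    have h2 : HasDerivAt (fun s : ℝ => (1-C)*L*Real.log s) ((1-C)*L*(1/t)) t := by
      simpa [one_div] using (Real.hasDerivAt_log ht0).const_mul ((1-C)*L)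
    have h3 : HasDerivAt (fun s : ℝ => |M| * Real.exp (-s)) (|M| * (-Real.exp (-t))) t := by
      have := ((Real.hasDerivAt_exp (-t)).comp t (hasDerivAt_neg t)).const_mul |M|
      simpa [mul_comm] using this
    exact (h1.add h2).add h3
  have hψcont : ContinuousOn ψ (Ici s₁) := by
    have h2le : (2:ℝ) ≤ s₁ := le_max_right _ _
    refine ContinuousOn.add (ContinuousOn.add
      (hy.continuousOn.mono (Ici_subset_Ici.mpr (le_max_left _ _))) ?_) ?_
    · exact (continuousOn_const.mul (Real.continuousOn_log.mono (fun s hs => by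
        have : s₁ ≤ s := hs
        simp only [mem_compl_iff, mem_singleton_iff]
        intro h0
        rw [h0] at this
        linarith)))
    · exact (continuousOn_const.mul
        ((Real.continuous_exp.comp continuous_neg).continuousOn))
  have hψanti : AntitoneOn ψ (Ici s₁) := by
    refine anti_aux hψcont hψd ?_
    intro t ht
    have ht' : s₁ < t := ht
    have ht₀ : s₀ < t := lt_of_le_of_lt (le_max_left _ _) ht'
    have ht2 : (2:ℝ) < t := lt_of_le_of_lt (le_max_right _ _) ht'
    have hbd := hy1bd t ht₀
    have hee : Real.exp (-t^2/2) ≤ Real.exp (-t) := by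
      apply Real.exp_le_exp.mpr
      nlinarith
    have habs : (0:ℝ) ≤ |M| := abs_nonneg M
    have : |M| * Real.exp (-t^2/2) ≤ |M| * Real.exp (-t) :=
      mul_le_mul_of_nonneg_left hee habs
    have hd1 : (1-C)*L/t = (1-C)*L*(1/t) := by ring
    rw [hd1] at hbd
    linarith
  -- final contradiction
  set X := (ψ s₁ + 1)/((1-C)*L) with hXdef
  set S := max s₁ (Real.exp X) with hSdef
  have hS1 : s₁ ≤ S := le_max_left _ _
  have hSpos : 0 < S := lt_of_lt_of_le (Real.exp_pos X) (le_max_right _ _)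
  have hXle : X ≤ Real.log S :=
    (Real.le_log_iff_exp_le hSpos).mpr (le_max_right _ _)
  have hψS : ψ S ≤ ψ s₁ := hψanti self_mem_Ici hS1 hS1
  have hlogS : ψ s₁ + 1 ≤ (1-C)*L*Real.log S := by
    have hc : (1-C)*L*X = ψ s₁ + 1 := by
      rw [hXdef]
      field_simp
      exact mul_div_cancel_left₀ _ (by linarith : (1:ℝ) - C ≠ 0)
    calc ψ s₁ + 1 = (1-C)*L*X := hc.symm
      _ ≤ (1-C)*L*Real.log S := mul_le_mul_of_nonneg_left hXle h1C.le
  have hySpos : 0 < y S :=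
    hpos S (le_trans (le_max_left _ _) hS1)
  have hexpS : (0:ℝ) ≤ |M| * Real.exp (-S) :=
    mul_nonneg (abs_nonneg M) (Real.exp_pos _).le
  have : y S + (1-C)*L*Real.log S + |M| * Real.exp (-S) ≤ ψ s₁ := hψS
  linarith
end
end

section
/- Let s₀ > 0 and 0 < C < 1 be real numbers, and let b : [s₀,∞) → ℝ be a smooth function satisfying the Riccati equation b'(s) = −s·b(s)² + ((s²−1)/s)·b(s) + C/s for all s ≥ s₀, with b(s₀) = 0. Then b(s) ∈ [0,1] for all s ≥ s₀. -/
open Set Filter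
open Topology

noncomputable section

/-- If `b` is a smooth solution on `[s₀,∞)` of the Riccati equation
`b' = -s b^2 + ((s^2-1)/s) b + C/s` with `b s₀ = 0`, where `s₀ > 0` and
`0 < C < 1`, then `b(s) ∈ [0,1]` for all `s ≥ s₀`. -/
theorem stmt_14 (s₀ C : ℝ) (hs₀ : 0 < s₀) (hC : 0 < C) (hC' : C < 1)
    (b : ℝ → ℝ) (hb : ContDiffOn ℝ (⊤ : ℕ∞) b (Ici s₀))
    (ode : ∀ s ∈ Ici s₀,
      derivWithin b (Ici s₀) s
        = -s * b s ^ 2 + ((s ^ 2 - 1) / s) * b s + C / s)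
    (hinit : b s₀ = 0) :
    ∀ s ∈ Ici s₀, b s ∈ Icc (0:ℝ) 1 := by
  intro s₁ hs₁
  by_contra hcon
  set S : Set ℝ := {s | s ∈ Icc s₀ s₁ ∧ b s ∉ Icc (0:ℝ) 1} with hSdef
  have hs₁S : s₁ ∈ S := ⟨⟨hs₁, le_refl _⟩, hcon⟩
  have hSne : S.Nonempty := ⟨s₁, hs₁S⟩
  have hSbdd : BddBelow S := ⟨s₀, fun x hx => hx.1.1⟩
  set t := sInf S with htdef
  have hts₀ : s₀ ≤ t := le_csInf hSne fun x hx => hx.1.1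
  have hts₁ : t ≤ s₁ := csInf_le hSbdd hs₁S
  have htpos : 0 < t := lt_of_lt_of_le hs₀ hts₀
  have htmem : t ∈ Ici s₀ := hts₀
  have hSsub : S ⊆ Ici s₀ := fun x hx => le_trans hts₀ (csInf_le hSbdd hx)
  have hcl : t ∈ closure S := csInf_mem_closure hSne hSbdd
  have hF : (𝓝[S] t).NeBot := mem_closure_iff_nhdsWithin_neBot.mp hcl
  have hcont : ContinuousWithinAt b (Ici s₀) t := (hb.continuousOn) t htmem
  have hcontS : Tendsto b (𝓝[S] t) (𝓝 (b t)) := hcont.mono hSsub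
  -- b t ∈ Icc 0 1
  have hbt : b t ∈ Icc (0:ℝ) 1 := by
    rcases eq_or_lt_of_le hts₀ with heq | hlt
    · rw [← heq, hinit]; exact ⟨le_refl _, zero_le_one⟩
    · have hclo : t ∈ closure (Ico s₀ t) := by
        rw [closure_Ico hlt.ne]; exact ⟨le_of_lt hlt, le_refl _⟩
      have hne : (𝓝[Ico s₀ t] t).NeBot := mem_closure_iff_nhdsWithin_neBot.mp hclo
      have htend : Tendsto b (𝓝[Ico s₀ t] t) (𝓝 (b t)) :=
        hcont.mono fun x hx => hx.1
      refine isClosed_Icc.mem_of_tendsto htend ?_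
      filter_upwards [self_mem_nhdsWithin] with x hx
      by_contra hxn
      have hxS : x ∈ S := ⟨⟨hx.1, le_of_lt (lt_of_lt_of_le hx.2 hts₁)⟩, hxn⟩
      exact absurd (csInf_le hSbdd hxS) (not_le.mpr hx.2)
  -- b t ∉ Ioo 0 1
  have hbt' : b t ∉ Ioo (0:ℝ) 1 := by
    have : b t ∈ (Ioo (0:ℝ) 1)ᶜ := by
      refine isOpen_Ioo.isClosed_compl.mem_of_tendsto hcontS ?_
      filter_upwards [self_mem_nhdsWithin] with x hx
      exact fun hmem => hx.2 (Ioo_subset_Icc_self hmem)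
    exact this
  have htS : t ∉ S := fun h => h.2 hbt
  have hSIoi : S ⊆ Ioi t := fun x hx =>
    lt_of_le_of_ne (csInf_le hSbdd hx) (fun h => htS (by rw [show t = x from h]; exact hx))
  have hle : 𝓝[S] t ≤ 𝓝[Ioi t] t := nhdsWithin_mono t hSIoi
  have hIoisub : Ioi t ⊆ Ici s₀ := fun x hx => le_trans hts₀ (le_of_lt hx)
  -- derivative at t
  have hd : HasDerivWithinAt b (derivWithin b (Ici s₀) t) (Ici s₀) t :=
    ((hb.differentiableOn (by simp)) t htmem).hasDerivWithinAt
  have hcont' : Tendsto b (𝓝[Ioi t] t) (𝓝 (b t)) := hcont.mono hIoisub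
  have hdIoi : HasDerivWithinAt b (derivWithin b (Ici s₀) t) (Ioi t) t := hd.mono hIoisub
  have hslope : Tendsto (slope b t) (𝓝[Ioi t] t) (𝓝 (derivWithin b (Ici s₀) t)) := by
    have := hasDerivWithinAt_iff_tendsto_slope.mp hdIoi
    rwa [show Ioi t \ {t} = Ioi t from Set.diff_singleton_eq_self (by simp)] at this
  -- main claim: eventually in 𝓝[Ioi t] t, b s ∈ Icc 0 1
  have hmain : ∀ᶠ s in 𝓝[Ioi t] t, b s ∈ Icc (0:ℝ) 1 := by
    have hcases : b t = 0 ∨ b t = 1 := by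
      rcases hbt with ⟨h0, h1⟩
      by_contra hne
      push_neg at hne
      exact hbt' ⟨lt_of_le_of_ne h0 (Ne.symm hne.1), lt_of_le_of_ne h1 hne.2⟩
    have hode : derivWithin b (Ici s₀) t
        = -t * b t ^ 2 + ((t ^ 2 - 1) / t) * b t + C / t := ode t htmem
    rcases hcases with h0 | h1
    · -- b t = 0, derivative = C/t > 0
      have hdval : derivWithin b (Ici s₀) t = C / t := by rw [hode, h0]; ring
      have hdpos : 0 < derivWithin b (Ici s₀) t := by
        rw [hdval]; positivity
      have h1 : ∀ᶠ s in 𝓝[Ioi t] t, 0 < slope b t s :=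
        hslope.eventually (eventually_gt_nhds hdpos)
      have h2 : ∀ᶠ s in 𝓝[Ioi t] t, b s < 1 := by
        rw [h0] at hcont'
        exact hcont'.eventually (eventually_lt_nhds one_pos)
      filter_upwards [h1, h2, self_mem_nhdsWithin] with s hs1 hs2 hs3
      have hst : (0:ℝ) < s - t := sub_pos.mpr hs3
      rw [slope_def_field, div_eq_inv_mul] at hs1
      have : 0 < b s - b t := by
        by_contra hneg
        push_neg at hneg
        nlinarith [inv_pos.mpr hst]
      rw [h0] at this
      exact ⟨le_of_lt (by linarith), le_of_lt hs2⟩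
    · -- b t = 1, derivative = (C-1)/t < 0
      have hdval : derivWithin b (Ici s₀) t = (C - 1) / t := by
        rw [hode, h1]
        field_simp
        ring
      have hdneg : derivWithin b (Ici s₀) t < 0 := by
        rw [hdval]
        exact div_neg_of_neg_of_pos (by linarith) htpos
      have hs1 : ∀ᶠ s in 𝓝[Ioi t] t, slope b t s < 0 :=
        hslope.eventually (eventually_lt_nhds hdneg)
      have hs2 : ∀ᶠ s in 𝓝[Ioi t] t, 0 < b s := by
        rw [h1] at hcont'
        exact hcont'.eventually (eventually_gt_nhds one_pos)
      filter_upwards [hs1, hs2, self_mem_nhdsWithin] with s hsl hsp hsm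
      have hst : (0:ℝ) < s - t := sub_pos.mpr hsm
      rw [slope_def_field, div_eq_inv_mul] at hsl
      have : b s - b t < 0 := by
        by_contra hpos
        push_neg at hpos
        nlinarith [inv_pos.mpr hst]
      rw [h1] at this
      exact ⟨le_of_lt hsp, le_of_lt (by linarith)⟩
  -- contradiction
  have h1 : ∀ᶠ s in 𝓝[S] t, b s ∈ Icc (0:ℝ) 1 := hle hmain
  have h2 : ∀ᶠ s in 𝓝[S] t, s ∈ S := self_mem_nhdsWithin
  obtain ⟨s, hs1, hs2⟩ := (h1.and h2).exists
  exact hs2.2 hs1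
end
end

section
/- Let p, q ≥ 3 be integers and let a, b > 0 be real numbers, and set h = a·h₀ and f = b·f_C. Then for all t ≥ 0 one has the identity −(p−1)·h''(t)/h(t) − (q−1)·f''(t)/f(t) = ((p−1) − (q−1)·C)·exp(−h₀(t)²). In particular, if C < (p−1)/(q−1), then −(p−1)·h''(t)/h(t) − (q−1)·f''(t)/f(t) > 0 for all t ≥ 0. -/
open Set Filter

noncomputable section

/-- Monotone on `Icc 0 T` from nonneg `derivWithin` over `Ici 0` on the interior. -/
lemma mono_aux_s15 (g : ℝ → ℝ) (T : ℝ) (hg : ContDiffOn ℝ (⊤ : ℕ∞) g (Ici 0))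
    (hg' : ∀ t ∈ Ioo (0:ℝ) T, 0 ≤ derivWithin g (Ici 0) t) :
    MonotoneOn g (Icc 0 T) := by
  apply monotoneOn_of_deriv_nonneg (convex_Icc 0 T)
    (hg.continuousOn.mono Icc_subset_Ici_self)
  · intro x hx
    rw [interior_Icc] at hx
    exact ((hg.differentiableOn (by simp) x (le_of_lt hx.1)).differentiableAt
      (Ici_mem_nhds hx.1)).differentiableWithinAt
  · intro x hx
    rw [interior_Icc] at hx
    rw [← derivWithin_of_mem_nhds (Ici_mem_nhds hx.1)]
    exact hg' x hx

/-- For `h = a·h₀` and `f = b·f_C` the Ricci curvature `Ric(∂ₜ,∂ₜ)` of the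
doubly warped product satisfies
`-(p-1) h''/h - (q-1) f''/f = ((p-1) - (q-1) C) exp (-h₀^2)`;
in particular it is positive whenever `C < (p-1)/(q-1)`. -/
theorem stmt_15 (lam : ℝ) (hlam : 0 < lam) (h : ℝ → ℝ) (hh : IsH0Sol lam h)
    (C : ℝ) (hC : 0 < C) (hC' : C < 1) (f : ℝ → ℝ) (hf : IsFCSol C h f)
    (p q : ℕ) (hp : 3 ≤ p) (hq : 3 ≤ q)
    (a b : ℝ) (ha : 0 < a) (hb : 0 < b)
    (H F H2 F2 : ℝ → ℝ)
    (hH : H = fun t => a * h t) (hF : F = fun t => b * f t)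
    (hH2 : H2 = derivWithin (derivWithin H (Ici 0)) (Ici 0))
    (hF2 : F2 = derivWithin (derivWithin F (Ici 0)) (Ici 0)) :
    (∀ t ∈ Ici (0:ℝ),
      -((p:ℝ) - 1) * H2 t / H t - ((q:ℝ) - 1) * F2 t / F t
        = (((p:ℝ) - 1) - ((q:ℝ) - 1) * C) * Real.exp (-(h t ^ 2))) ∧
    (C < ((p:ℝ) - 1) / ((q:ℝ) - 1) →
      ∀ t ∈ Ici (0:ℝ),
        0 < -((p:ℝ) - 1) * H2 t / H t - ((q:ℝ) - 1) * F2 t / F t) := by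
  obtain ⟨hsm, hde, h0⟩ := hh
  obtain ⟨fsm, fde, f0, f'0⟩ := hf
  have hU : UniqueDiffOn ℝ (Ici (0:ℝ)) := uniqueDiffOn_Ici 0
  have h'sm : ContDiffOn ℝ (⊤ : ℕ∞) (derivWithin h (Ici 0)) (Ici 0) := hsm.derivWithin hU (by simp)
  have f'sm : ContDiffOn ℝ (⊤ : ℕ∞) (derivWithin f (Ici 0)) (Ici 0) := fsm.derivWithin hU (by simp)
  -- h is positive on `Ici 0`
  have h0pos : 0 < h 0 := by
    rw [h0]
    apply Real.sqrt_pos.2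
    have h1 : min lam (1/2) ≤ 1/2 := min_le_right _ _
    have h2 : 0 < min lam (1/2) := lt_min hlam (by norm_num)
    have := Real.log_neg h2 (lt_of_le_of_lt h1 (by norm_num))
    linarith
  have hpos : ∀ t ∈ Ici (0:ℝ), 0 < h t := by
    intro t ht
    have hm : MonotoneOn h (Icc 0 t) := by
      apply mono_aux_s15 h t hsm
      intro s hs
      rw [hde s (le_of_lt hs.1)]
      positivity
    calc (0:ℝ) < h 0 := h0pos
      _ ≤ h t := hm ⟨le_refl 0, ht⟩ ⟨ht, le_refl t⟩ ht
  -- f is positive on `Ici 0`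
  have fpos : ∀ t ∈ Ici (0:ℝ), 0 < f t := by
    by_contra hcon
    push_neg at hcon
    obtain ⟨t₀, ht₀, hft₀⟩ := hcon
    have hZcl : IsClosed (Ici 0 ∩ f ⁻¹' Iic (1/2)) :=
      fsm.continuousOn.preimage_isClosed_of_isClosed isClosed_Ici isClosed_Iic
    have hZne : (Ici 0 ∩ f ⁻¹' Iic (1/2)).Nonempty :=
      ⟨t₀, ht₀, by simp only [mem_preimage, mem_Iic]; linarith⟩
    have hZbd : BddBelow (Ici 0 ∩ f ⁻¹' Iic (1/2)) := ⟨0, fun z hz => hz.1⟩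
    set t₁ := sInf (Ici 0 ∩ f ⁻¹' Iic (1/2)) with ht₁def
    have ht₁Z : t₁ ∈ Ici 0 ∩ f ⁻¹' Iic (1/2) := hZcl.csInf_mem hZne hZbd
    have ht₁0 : (0:ℝ) ≤ t₁ := ht₁Z.1
    have hless : ∀ s ∈ Ico (0:ℝ) t₁, 1/2 < f s := by
      intro s hs
      by_contra hcon2
      push_neg at hcon2
      exact absurd (csInf_le hZbd ⟨hs.1, hcon2⟩) (not_le.2 hs.2)
    have hf'mono : MonotoneOn (derivWithin f (Ici 0)) (Icc 0 t₁) := by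
      apply mono_aux_s15 _ t₁ f'sm
      intro s hs
      rw [fde s (le_of_lt hs.1)]
      have hfs : 0 < f s := lt_trans (by norm_num)
        (hless s ⟨le_of_lt hs.1, hs.2⟩)
      positivity
    have hf'nonneg : ∀ s ∈ Icc (0:ℝ) t₁, 0 ≤ derivWithin f (Ici 0) s := by
      intro s hs
      have := hf'mono ⟨le_refl 0, ht₁0⟩ hs hs.1
      rw [f'0] at this
      exact this
    have hfmono : MonotoneOn f (Icc 0 t₁) := by
      apply mono_aux_s15 f t₁ fsm
      intro s hs
      exact hf'nonneg s ⟨le_of_lt hs.1, le_of_lt hs.2⟩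
    have h1le : (1:ℝ) ≤ f t₁ := by
      have := hfmono ⟨le_refl 0, ht₁0⟩ ⟨ht₁0, le_refl t₁⟩ ht₁0
      rw [f0] at this
      exact this
    have : f t₁ ≤ 1/2 := ht₁Z.2
    linarith
  -- derivative of h
  have hder : ∀ t ∈ Ici (0:ℝ),
      HasDerivWithinAt h (Real.exp (-(h t ^ 2) / 2)) (Ici 0) t := by
    intro t ht
    have := (hsm.differentiableOn (by simp) t ht).hasDerivWithinAt
    rwa [hde t ht] at this
  -- second derivative of h
  have hdd : ∀ t ∈ Ici (0:ℝ),
      derivWithin (derivWithin h (Ici 0)) (Ici 0) t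
        = -(h t) * Real.exp (-(h t ^ 2)) := by
    intro t ht
    have e1 : derivWithin (derivWithin h (Ici 0)) (Ici 0) t
        = derivWithin (fun s => Real.exp (-(h s ^ 2) / 2)) (Ici 0) t :=
      derivWithin_congr (fun s hs => hde s hs) (hde t ht)
    have hd : HasDerivWithinAt (fun s => Real.exp (-(h s ^ 2) / 2))
        (Real.exp (-(h t ^ 2) / 2) *
          (-((2:ℕ) * h t ^ 1 * Real.exp (-(h t ^ 2) / 2)) / 2)) (Ici 0) t :=
      (((hder t ht).pow 2).neg.div_const 2).exp
    rw [e1, hd.derivWithin (hU t ht)]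
    rw [show (-(h t ^ 2)) = -(h t ^ 2) / 2 + -(h t ^ 2) / 2 by ring, Real.exp_add]
    push_cast
    ring
  -- H2 value
  have hH2val : ∀ t ∈ Ici (0:ℝ), H2 t = a * (-(h t) * Real.exp (-(h t ^ 2))) := by
    intro t ht
    have e1 : ∀ s ∈ Ici (0:ℝ), derivWithin H (Ici 0) s
        = a * derivWithin h (Ici 0) s := by
      intro s hs
      rw [hH]
      exact (((hsm.differentiableOn (by simp) s hs).hasDerivWithinAt).const_mul
        a).derivWithin (hU s hs)
    rw [hH2, derivWithin_congr (fun s hs => e1 s hs) (e1 t ht)]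
    have e2 : derivWithin (fun s => a * derivWithin h (Ici 0) s) (Ici 0) t
        = a * derivWithin (derivWithin h (Ici 0)) (Ici 0) t :=
      (((h'sm.differentiableOn (by simp) t ht).hasDerivWithinAt).const_mul
        a).derivWithin (hU t ht)
    rw [e2, hdd t ht]
  -- F2 value
  have hF2val : ∀ t ∈ Ici (0:ℝ), F2 t = b * (C * Real.exp (-(h t ^ 2)) * f t) := by
    intro t ht
    have e1 : ∀ s ∈ Ici (0:ℝ), derivWithin F (Ici 0) s
        = b * derivWithin f (Ici 0) s := by
      intro s hs
      rw [hF]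
      exact (((fsm.differentiableOn (by simp) s hs).hasDerivWithinAt).const_mul
        b).derivWithin (hU s hs)
    rw [hF2, derivWithin_congr (fun s hs => e1 s hs) (e1 t ht)]
    have e2 : derivWithin (fun s => b * derivWithin f (Ici 0) s) (Ici 0) t
        = b * derivWithin (derivWithin f (Ici 0)) (Ici 0) t :=
      (((f'sm.differentiableOn (by simp) t ht).hasDerivWithinAt).const_mul
        b).derivWithin (hU t ht)
    rw [e2, fde t ht]
  -- main identity
  have main : ∀ t ∈ Ici (0:ℝ),
      -((p:ℝ) - 1) * H2 t / H t - ((q:ℝ) - 1) * F2 t / F t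
        = (((p:ℝ) - 1) - ((q:ℝ) - 1) * C) * Real.exp (-(h t ^ 2)) := by
    intro t ht
    rw [hH2val t ht, hF2val t ht, hH, hF]
    have h1 := (hpos t ht).ne'
    have h2 := (fpos t ht).ne'
    field_simp
  refine ⟨main, fun hlt t ht => ?_⟩
  rw [main t ht]
  have hq1 : (0:ℝ) < (q:ℝ) - 1 := by
    have : (3:ℝ) ≤ (q:ℝ) := by exact_mod_cast hq
    linarith
  have hmul : C * ((q:ℝ) - 1) < (p:ℝ) - 1 := (lt_div_iff₀ hq1).1 hlt
  have hexp := Real.exp_pos (-(h t ^ 2))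
  apply mul_pos _ hexp
  linarith
end
end

section
/- Let p, q ≥ 3 be integers. Then there exists a constant a₀ > 0 such that for all a ∈ (0, a₀) and all t ≥ 0 one has exp(−h₀(t)²) + (p−2)·(a⁻² − exp(−h₀(t)²))/h₀(t)² − (q−1)·f_C'(t)·h₀'(t)/(f_C(t)·h₀(t)) > 0. -/
open Set Filter
open Topology

set_option maxHeartbeats 1000000

noncomputable section

private lemma aux_pos {φ : ℝ → ℝ} (hc : ContinuousOn φ (Ici 0)) (h0 : 0 < φ 0)
    (hkey : ∀ t₀ ∈ Ici (0:ℝ), φ t₀ = 0 → (∀ s, 0 ≤ s → s < t₀ → 0 < φ s) → False) :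
    ∀ t ∈ Ici (0:ℝ), 0 < φ t := by
  intro T hT
  by_contra hle
  push_neg at hle
  have hT0 : (0:ℝ) ≤ T := hT
  set Z : Set ℝ := Icc 0 T ∩ φ ⁻¹' {0} with hZdef
  have hsub : Icc (0:ℝ) T ⊆ Ici 0 := Icc_subset_Ici_self
  have hccc : ContinuousOn φ (Icc 0 T) := hc.mono hsub
  have hZne : Z.Nonempty := by
    have h0mem : (0:ℝ) ∈ Icc (φ T) (φ 0) := ⟨hle, h0.le⟩
    obtain ⟨t, ht, hφt⟩ := intermediate_value_Icc' hT0 hccc h0mem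
    exact ⟨t, ht, by simpa using hφt⟩
  have hZcl : IsClosed Z := hccc.preimage_isClosed_of_isClosed isClosed_Icc isClosed_singleton
  have hZbdd : BddBelow Z := (bddBelow_Icc : BddBelow (Icc (0:ℝ) T)).mono inter_subset_left
  have ht₀Z : sInf Z ∈ Z := hZcl.csInf_mem hZne hZbdd
  set t₀ := sInf Z with ht₀def
  have ht₀Icc : t₀ ∈ Icc 0 T := ht₀Z.1
  have hφt₀ : φ t₀ = 0 := ht₀Z.2
  refine hkey t₀ ht₀Icc.1 hφt₀ ?_
  intro s hs0 hst
  have hsIcc : s ∈ Icc (0:ℝ) T := ⟨hs0, hst.le.trans ht₀Icc.2⟩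
  rcases lt_trichotomy (φ s) 0 with hneg | hzero | hpos
  · have h0mem : (0:ℝ) ∈ Icc (φ s) (φ 0) := ⟨hneg.le, h0.le⟩
    obtain ⟨u, hu, hφu⟩ :=
      intermediate_value_Icc' hs0 (hccc.mono (Icc_subset_Icc_right hsIcc.2)) h0mem
    have huZ : u ∈ Z := ⟨⟨hu.1, hu.2.trans hsIcc.2⟩, by simpa using hφu⟩
    have hut : u < t₀ := lt_of_le_of_lt hu.2 hst
    linarith [csInf_le hZbdd huZ]
  · exfalso
    have hsZ : s ∈ Z := ⟨hsIcc, by simpa using hzero⟩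
    linarith [csInf_le hZbdd hsZ]
  · exact hpos

private lemma mono_aux_s16 {ψ : ℝ → ℝ} (hψ : ContinuousOn ψ (Ici 0))
    (hd : ∀ x ∈ Ici (0:ℝ), DifferentiableWithinAt ℝ ψ (Ici 0) x)
    {D : Set ℝ} (hD : Convex ℝ D) (hsub : D ⊆ Ici 0) (hint : interior D ⊆ Ioi 0)
    (hpos : ∀ x ∈ interior D, 0 ≤ derivWithin ψ (Ici 0) x) : MonotoneOn ψ D := by
  have hdiff : ∀ x ∈ interior D, DifferentiableAt ℝ ψ x := by
    intro x hx
    have hx0 : (0:ℝ) < x := hint hx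
    exact (hd x hx0.le).differentiableAt (Ici_mem_nhds hx0)
  refine monotoneOn_of_deriv_nonneg hD (hψ.mono hsub)
    (fun x hx => (hdiff x hx).differentiableWithinAt) ?_
  intro x hx
  have hx0 : (0:ℝ) < x := hint hx
  rw [← derivWithin_of_mem_nhds (Ici_mem_nhds hx0)]
  exact hpos x hx

/-- For `a` small enough, the Ricci curvature `Ric(V,V)` of the doubly warped
product is positive for all `t ≥ 0`:
`exp (-h₀^2) + (p-2)(a⁻² - exp (-h₀^2))/h₀² - (q-1) f_C' h₀'/(f_C h₀) > 0`. -/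
theorem stmt_16 (lam : ℝ) (hlam : 0 < lam) (h : ℝ → ℝ) (hh : IsH0Sol lam h)
    (C : ℝ) (hC : 0 < C) (hC' : C < 1) (f : ℝ → ℝ) (hf : IsFCSol C h f)
    (p q : ℕ) (hp : 3 ≤ p) (hq : 3 ≤ q) :
    ∃ a₀ > (0:ℝ), ∀ a ∈ Ioo (0:ℝ) a₀, ∀ t ∈ Ici (0:ℝ),
      0 < Real.exp (-(h t ^ 2))
          + ((p:ℝ) - 2) * ((a ^ 2)⁻¹ - Real.exp (-(h t ^ 2))) / h t ^ 2
          - ((q:ℝ) - 1) * derivWithin f (Ici 0) t * derivWithin h (Ici 0) t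
              / (f t * h t) := by
  obtain ⟨hhC, hhD, hh0⟩ := hh
  obtain ⟨hfC, hfD, hf0, hf'0⟩ := hf
  set F' : ℝ → ℝ := derivWithin f (Ici 0) with hF'def
  clear_value F'
  have hcont_h : ContinuousOn h (Ici 0) := hhC.continuousOn
  have hcont_f : ContinuousOn f (Ici 0) := hfC.continuousOn
  have hF'C : ContDiffOn ℝ (⊤ : ℕ∞) F' (Ici 0) := by
    rw [hF'def]; exact hfC.derivWithin (uniqueDiffOn_Ici 0) (by simp)
  have hcont_F' : ContinuousOn F' (Ici 0) := hF'C.continuousOn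
  have hdiff_f : ∀ x ∈ Ici (0:ℝ), DifferentiableWithinAt ℝ f (Ici 0) x :=
    fun x hx => hfC.differentiableOn (by simp) x hx
  have hdiff_F' : ∀ x ∈ Ici (0:ℝ), DifferentiableWithinAt ℝ F' (Ici 0) x :=
    fun x hx => hF'C.differentiableOn (by simp) x hx
  -- h 0 > 0
  have hm0 : 0 < min lam (1/2) := lt_min hlam (by norm_num)
  have hlog : Real.log (min lam (1/2)) < 0 :=
    Real.log_neg hm0 (lt_of_le_of_lt (min_le_right _ _) (by norm_num))
  have h0pos : 0 < h 0 := by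
    rw [hh0]; exact Real.sqrt_pos.2 (by linarith)
  -- h is monotone, hence positive
  have hmono : StrictMonoOn h (Ici 0) := by
    apply strictMonoOn_of_deriv_pos (convex_Ici 0) hcont_h
    intro x hx
    rw [interior_Ici] at hx
    rw [← derivWithin_of_mem_nhds (Ici_mem_nhds hx), hhD x (show (0:ℝ) ≤ x from hx.le)]
    positivity
  have hpos : ∀ t ∈ Ici (0:ℝ), 0 < h t := by
    intro t ht
    rcases eq_or_lt_of_le (show (0:ℝ) ≤ t from ht) with rfl | htpos
    · exact h0pos
    · exact lt_trans h0pos (hmono self_mem_Ici ht htpos)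
  -- f is positive
  have fpos : ∀ t ∈ Ici (0:ℝ), 0 < f t := by
    apply aux_pos hcont_f (by rw [hf0]; norm_num)
    intro t₀ ht₀ hft₀ hprev
    have hfnn : ∀ s ∈ Icc (0:ℝ) t₀, 0 ≤ f s := by
      intro s hs
      rcases eq_or_lt_of_le hs.2 with rfl | hlt
      · exact hft₀.ge
      · exact (hprev s hs.1 hlt).le
    have hF'mono : MonotoneOn F' (Icc 0 t₀) := by
      apply mono_aux_s16 hcont_F' hdiff_F' (convex_Icc 0 t₀) Icc_subset_Ici_self
      · rw [interior_Icc]; exact fun x hx => hx.1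
      · intro x hx
        rw [interior_Icc] at hx
        rw [hfD x hx.1.le]
        exact mul_nonneg (by positivity) (hfnn x ⟨hx.1.le, hx.2.le⟩)
    have hF'nn : ∀ s ∈ Icc (0:ℝ) t₀, 0 ≤ F' s := by
      intro s hs
      have := hF'mono (left_mem_Icc.2 ht₀) hs hs.1
      rwa [hf'0] at this
    have hfmono : MonotoneOn f (Icc 0 t₀) := by
      apply mono_aux_s16 hcont_f hdiff_f (convex_Icc 0 t₀) Icc_subset_Ici_self
      · rw [interior_Icc]; exact fun x hx => hx.1
      · intro x hx
        rw [interior_Icc] at hx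
        rw [← hF'def]
        exact hF'nn x ⟨hx.1.le, hx.2.le⟩
    have h1 : (1:ℝ) ≤ f t₀ := by
      have := hfmono (left_mem_Icc.2 ht₀) (right_mem_Icc.2 ht₀) ht₀
      rwa [hf0] at this
    rw [hft₀] at h1; linarith
  -- F' ≥ 0 and f ≥ 1 globally
  have hF'mono : MonotoneOn F' (Ici 0) := by
    apply mono_aux_s16 hcont_F' hdiff_F' (convex_Ici 0) subset_rfl (by rw [interior_Ici])
    intro x hx
    rw [interior_Ici] at hx
    rw [hfD x (show (0:ℝ) ≤ x from hx.le)]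
    exact mul_nonneg (by positivity) (fpos x (show (0:ℝ) ≤ x from hx.le)).le
  have hF'nn : ∀ t ∈ Ici (0:ℝ), 0 ≤ F' t := by
    intro t ht
    have := hF'mono self_mem_Ici ht ht
    rwa [hf'0] at this
  have hfmono : MonotoneOn f (Ici 0) := by
    apply mono_aux_s16 hcont_f hdiff_f (convex_Ici 0) subset_rfl (by rw [interior_Ici])
    intro x hx
    rw [interior_Ici] at hx
    rw [← hF'def]
    exact hF'nn x (show (0:ℝ) ≤ x from hx.le)
  have hf1 : ∀ t ∈ Ici (0:ℝ), 1 ≤ f t := by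
    intro t ht
    have := hfmono self_mem_Ici ht ht
    rwa [hf0] at this
  -- f - F' > 0
  have hgd : ∀ x ∈ Ici (0:ℝ), derivWithin (fun s => f s - F' s) (Ici 0) x
      = F' x - C * Real.exp (-(h x ^ 2)) * f x := by
    intro x hx
    rw [show (fun s => f s - F' s) = f - F' from rfl, derivWithin_sub (hdiff_f x hx) (hdiff_F' x hx), hfD x hx, ← hF'def]
  have hG'cont : ContinuousOn (fun x => F' x - C * Real.exp (-(h x ^ 2)) * f x) (Ici 0) := by
    apply hcont_F'.sub
    apply ContinuousOn.mul _ hcont_f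
    exact continuousOn_const.mul (Real.continuous_exp.comp_continuousOn (hcont_h.pow 2).neg)
  have hgpos : ∀ t ∈ Ici (0:ℝ), 0 < f t - F' t := by
    apply aux_pos (φ := fun s => f s - F' s) (hcont_f.sub hcont_F') (by rw [hf0, hf'0]; norm_num)
    intro t₀ ht₀ hg0 hprev
    have hft₀ : F' t₀ = f t₀ := by linarith [hg0]
    have ht₀pos : 0 < t₀ := by
      rcases eq_or_lt_of_le (show (0:ℝ) ≤ t₀ from ht₀) with rfl | hpos'
      · exfalso; rw [hf0, hf'0] at hg0; norm_num at hg0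
      · exact hpos'
    have hG't₀ : 0 < F' t₀ - C * Real.exp (-(h t₀ ^ 2)) * f t₀ := by
      have hfp := fpos t₀ ht₀
      have hexp : Real.exp (-(h t₀ ^ 2)) ≤ 1 := Real.exp_le_one_iff.2 (neg_nonpos.2 (sq_nonneg _))
      have hexp0 : 0 < Real.exp (-(h t₀ ^ 2)) := Real.exp_pos _
      rw [hft₀]
      have h1 : C * Real.exp (-(h t₀ ^ 2)) ≤ C := by nlinarith
      nlinarith [mul_le_mul_of_nonneg_left h1 hfp.le, mul_pos hfp (sub_pos.2 hC')]
    have hcA : ContinuousAt (fun x => F' x - C * Real.exp (-(h x ^ 2)) * f x) t₀ :=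
      (hG'cont t₀ ht₀).continuousAt (Ici_mem_nhds ht₀pos)
    have hnhds : (fun x => F' x - C * Real.exp (-(h x ^ 2)) * f x) ⁻¹' Ioi 0 ∈ 𝓝 t₀ :=
      hcA.preimage_mem_nhds (Ioi_mem_nhds hG't₀)
    obtain ⟨ε, hε, hball⟩ := Metric.mem_nhds_iff.1 hnhds
    set c : ℝ := t₀ - min (ε / 2) (t₀ / 2) with hcdef
    have hc0 : 0 < c := by
      have := min_le_right (ε / 2) (t₀ / 2)
      simp only [hcdef]; linarith
    have hct₀ : c < t₀ := by
      have h1 := lt_min (half_pos hε) (half_pos ht₀pos)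
      simp only [hcdef]; linarith
    have hsm : StrictMonoOn (fun s => f s - F' s) (Icc c t₀) := by
      apply strictMonoOn_of_deriv_pos (convex_Icc c t₀)
        ((hcont_f.sub hcont_F').mono (fun y hy => hc0.le.trans hy.1) : ContinuousOn (fun s => f s - F' s) (Icc c t₀))
      intro x hx
      rw [interior_Icc] at hx
      have hx0 : 0 < x := lt_trans hc0 hx.1
      rw [← derivWithin_of_mem_nhds (Ici_mem_nhds hx0), show f - F' = (fun s => f s - F' s) from rfl, hgd x hx0.le]
      have hxball : x ∈ Metric.ball t₀ ε := by
        rw [Metric.mem_ball, Real.dist_eq, abs_lt]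
        have hmin := min_le_left (ε / 2) (t₀ / 2)
        simp only [hcdef] at hx
        exact ⟨by linarith [hx.1], by linarith [hx.2]⟩
      exact hball hxball
    have hlt : f c - F' c < f t₀ - F' t₀ :=
      hsm ⟨le_refl c, hct₀.le⟩ ⟨hct₀.le, le_refl t₀⟩ hct₀
    have := hprev c hc0.le hct₀
    linarith
  -- final assembly
  have hq3 : (3:ℝ) ≤ (q:ℝ) := by exact_mod_cast hq
  have hp3 : (3:ℝ) ≤ (p:ℝ) := by exact_mod_cast hp
  have hqpos : (0:ℝ) < q := by linarith
  refine ⟨(q:ℝ)⁻¹, inv_pos.2 hqpos, ?_⟩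
  intro a ha t ht
  have ha0 : 0 < a := ha.1
  have haq1 : a * (q:ℝ) < 1 := by
    have := mul_lt_mul_of_pos_right ha.2 hqpos
    rwa [inv_mul_cancel₀ hqpos.ne'] at this
  have ha1 : a < 1 := by nlinarith [mul_le_mul_of_nonneg_left hq3 ha0.le]
  have haq : (q:ℝ) * a ^ 2 < 1 := by nlinarith
  have hkey : (q:ℝ) ≤ (a ^ 2)⁻¹ := by
    have h2 : (0:ℝ) < a ^ 2 := by positivity
    calc (q:ℝ) = (q:ℝ) * a ^ 2 / a ^ 2 := by field_simp
      _ ≤ 1 / a ^ 2 := by first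
        | (gcongr; exact haq.le)
        | gcongr
      _ = (a ^ 2)⁻¹ := one_div _
  have hx : 0 < h t := hpos t ht
  have hF1 : 1 ≤ f t := hf1 t ht
  have hD0 : 0 ≤ F' t := hF'nn t ht
  have hDF : F' t ≤ f t := by linarith [hgpos t ht]
  have hH : derivWithin h (Ici 0) t = Real.exp (-(h t ^ 2) / 2) := hhD t ht
  have hE1 : Real.exp (-(h t ^ 2)) ≤ 1 := Real.exp_le_one_iff.2 (neg_nonpos.2 (sq_nonneg _))
  have hE1pos : 0 < Real.exp (-(h t ^ 2)) := Real.exp_pos _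
  have hE2pos : 0 < Real.exp (-(h t ^ 2) / 2) := Real.exp_pos _
  have hxe : h t * Real.exp (-(h t ^ 2) / 2) ≤ 1 := by
    have h1 : h t ≤ Real.exp (h t ^ 2 / 2) := by
      have := Real.add_one_le_exp (h t ^ 2 / 2)
      nlinarith [sq_nonneg (h t - 1)]
    calc h t * Real.exp (-(h t ^ 2) / 2)
        ≤ Real.exp (h t ^ 2 / 2) * Real.exp (-(h t ^ 2) / 2) :=
          mul_le_mul_of_nonneg_right h1 hE2pos.le
      _ = 1 := by
          rw [← Real.exp_add, show h t ^ 2 / 2 + -(h t ^ 2) / 2 = 0 by ring, Real.exp_zero]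
  have hneg : ((q:ℝ) - 1) * F' t * derivWithin h (Ici 0) t / (f t * h t)
      ≤ ((q:ℝ) - 1) * Real.exp (-(h t ^ 2) / 2) / h t := by
    have hfh : 0 < f t * h t := mul_pos (by linarith) hx
    rw [hH, div_le_div_iff₀ hfh hx]
    have key : 0 ≤ ((q:ℝ) - 1) * Real.exp (-(h t ^ 2) / 2) * h t * (f t - F' t) :=
      mul_nonneg (mul_nonneg (mul_nonneg (show (0:ℝ) ≤ (q:ℝ) - 1 by linarith)
        hE2pos.le) hx.le) (sub_nonneg.2 hDF)
    calc ((q:ℝ) - 1) * F' t * Real.exp (-(h t ^ 2) / 2) * h t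
        = ((q:ℝ) - 1) * Real.exp (-(h t ^ 2) / 2) * (f t * h t)
          - ((q:ℝ) - 1) * Real.exp (-(h t ^ 2) / 2) * h t * (f t - F' t) := by ring
      _ ≤ ((q:ℝ) - 1) * Real.exp (-(h t ^ 2) / 2) * (f t * h t) := by linarith
  have hmid : ((q:ℝ) - 1) * Real.exp (-(h t ^ 2) / 2) / h t
      ≤ ((p:ℝ) - 2) * ((a ^ 2)⁻¹ - Real.exp (-(h t ^ 2))) / h t ^ 2 := by
    rw [div_le_div_iff₀ hx (pow_pos hx 2)]
    have hA : (q:ℝ) - 1 ≤ (a ^ 2)⁻¹ - Real.exp (-(h t ^ 2)) := by linarith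
    calc ((q:ℝ) - 1) * Real.exp (-(h t ^ 2) / 2) * h t ^ 2
        = ((q:ℝ) - 1) * (h t * Real.exp (-(h t ^ 2) / 2)) * h t := by ring
      _ ≤ ((q:ℝ) - 1) * 1 * h t := by
          apply mul_le_mul_of_nonneg_right _ hx.le
          exact mul_le_mul_of_nonneg_left hxe (by linarith)
      _ ≤ ((p:ℝ) - 2) * ((a ^ 2)⁻¹ - Real.exp (-(h t ^ 2))) * h t := by
          apply mul_le_mul_of_nonneg_right _ hx.le
          nlinarith [mul_nonneg (show (0:ℝ) ≤ (p:ℝ) - 3 by linarith)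
            (show (0:ℝ) ≤ (a ^ 2)⁻¹ - Real.exp (-(h t ^ 2)) by linarith)]
  linarith [hneg, hmid, hE1pos]
end
end

section
/- Let p, q ≥ 3 be integers. Then for every T > 0 there exists b₀ > 0 such that for all b ∈ (0, b₀), every t ≥ 0 with R_b(t) = 0 satisfies t > T. (In particular, the smallest positive zero t_b of R_b, when it exists, tends to infinity as b → 0.) -/
open Set Filter

noncomputable section

/-- Any zero of `R_b = Ric(W,W)` tends to infinity as `b → 0`: for every `T > 0`
there is `b₀ > 0` such that for `0 < b < b₀` every `t ≥ 0` with `R b t = 0`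
satisfies `t > T`. -/
theorem stmt_18 (lam : ℝ) (hlam : 0 < lam) (h : ℝ → ℝ) (hh : IsH0Sol lam h)
    (C : ℝ) (hC : 0 < C) (hC' : C < 1) (f : ℝ → ℝ) (hf : IsFCSol C h f)
    (p q : ℕ) (hp : 3 ≤ p) (hq : 3 ≤ q)
    (h1 f1 : ℝ → ℝ)
    (hh1 : h1 = derivWithin h (Ici 0)) (hf1 : f1 = derivWithin f (Ici 0))
    (R : ℝ → ℝ → ℝ)
    (hR : ∀ b t, R b t
      = -C * Real.exp (-(h t ^ 2))
        + ((q:ℝ) - 2) * ((b ^ 2)⁻¹ - f1 t ^ 2) / f t ^ 2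
        - ((p:ℝ) - 1) * h1 t * f1 t / (h t * f t)) :
    ∀ T > (0:ℝ), ∃ b₀ > (0:ℝ), ∀ b ∈ Ioo (0:ℝ) b₀,
      ∀ t ∈ Ici (0:ℝ), R b t = 0 → T < t := by
  obtain ⟨hhs, hhd, hh0⟩ := hh
  obtain ⟨hfs, -, hf0, -⟩ := hf
  -- h is positive on [0, ∞)
  have hh0pos : 0 < h 0 := by
    rw [hh0]
    apply Real.sqrt_pos.mpr
    have hlog : Real.log (min lam (1/2)) < 0 :=
      Real.log_neg (lt_min hlam (by norm_num))
        (lt_of_le_of_lt (min_le_right _ _) (by norm_num))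
    linarith
  have hmono : MonotoneOn h (Ici 0) := by
    apply monotoneOn_of_hasDerivWithinAt_nonneg (convex_Ici 0) hhs.continuousOn
      (f' := fun x => Real.exp (-(h x ^ 2) / 2))
    · intro x hx
      rw [interior_Ici] at hx ⊢
      have hd : DifferentiableWithinAt ℝ h (Ici 0) x :=
        hhs.differentiableOn (by simp) x (mem_Ici.mpr (le_of_lt (mem_Ioi.mp hx)))
      have hder := hd.hasDerivWithinAt
      rw [hhd x (mem_Ici.mpr (le_of_lt (mem_Ioi.mp hx)))] at hder
      exact hder.mono Ioi_subset_Ici_self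
    · intro x _
      positivity
  have hpos : ∀ t ∈ Ici (0:ℝ), 0 < h t := fun t ht =>
    lt_of_lt_of_le hh0pos (hmono self_mem_Ici ht ht)
  intro T hT
  set A : ℝ → ℝ := fun t => ((p:ℝ) - 1) * h1 t * f1 t / h t with hA
  have hsub : Icc (0:ℝ) T ⊆ Ici 0 := Icc_subset_Ici_self
  have hcf : ContinuousOn f (Icc 0 T) := hfs.continuousOn.mono hsub
  have hcf1 : ContinuousOn f1 (Icc 0 T) := by
    rw [hf1]
    exact ((hfs.derivWithin (uniqueDiffOn_Ici 0) (m := 1) (show (((1 + 1 : ℕ) : ℕ∞) : WithTop ℕ∞) ≤ ((⊤ : ℕ∞) : WithTop ℕ∞) from WithTop.coe_le_coe.mpr le_top)).continuousOn).mono hsub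
  have hch1 : ContinuousOn h1 (Icc 0 T) := by
    rw [hh1]
    exact ((hhs.derivWithin (uniqueDiffOn_Ici 0) (m := 1) (show (((1 + 1 : ℕ) : ℕ∞) : WithTop ℕ∞) ≤ ((⊤ : ℕ∞) : WithTop ℕ∞) from WithTop.coe_le_coe.mpr le_top)).continuousOn).mono hsub
  have hch : ContinuousOn h (Icc 0 T) := hhs.continuousOn.mono hsub
  have hcA : ContinuousOn A (Icc 0 T) :=
    ((continuousOn_const.mul hch1).mul hcf1).div hch
      (fun t ht => (hpos t (hsub ht)).ne')
  obtain ⟨M1, hM1⟩ := isCompact_Icc.exists_bound_of_continuousOn hcf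
  obtain ⟨M2, hM2⟩ := isCompact_Icc.exists_bound_of_continuousOn hcf1
  obtain ⟨M3, hM3⟩ := isCompact_Icc.exists_bound_of_continuousOn hcA
  set M : ℝ := max 1 (max M1 (max M2 M3)) with hM
  have hM1' : (1:ℝ) ≤ M := le_max_left _ _
  have hMf : ∀ t ∈ Icc (0:ℝ) T, |f t| ≤ M := fun t ht =>
    le_trans (Real.norm_eq_abs (f t) ▸ hM1 t ht)
      (le_trans (le_max_left _ _) (le_max_right _ _))
  have hMf1 : ∀ t ∈ Icc (0:ℝ) T, |f1 t| ≤ M := fun t ht =>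
    le_trans (Real.norm_eq_abs (f1 t) ▸ hM2 t ht)
      (le_trans (le_trans (le_max_left _ _) (le_max_right _ _)) (le_max_right _ _))
  have hMA : ∀ t ∈ Icc (0:ℝ) T, |A t| ≤ M := fun t ht =>
    le_trans (Real.norm_eq_abs (A t) ▸ hM3 t ht)
      (le_trans (le_trans (le_max_right _ _) (le_max_right _ _)) (le_max_right _ _))
  set B : ℝ := (2 + C) * M ^ 2 + 1 with hB
  have hBpos : 0 < B := by nlinarith
  refine ⟨Real.sqrt B⁻¹, Real.sqrt_pos.mpr (inv_pos.mpr hBpos), ?_⟩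
  intro b hb t ht hRt
  by_contra hc
  push_neg at hc
  have htT : t ∈ Icc (0:ℝ) T := ⟨ht, hc⟩
  have hb2 : b ^ 2 < B⁻¹ := (Real.lt_sqrt hb.1.le).mp hb.2
  have hb2pos : 0 < b ^ 2 := pow_pos hb.1 2
  have hbB : B < (b ^ 2)⁻¹ := by
    have := one_div_lt_one_div_of_lt hb2pos hb2
    rwa [one_div, one_div, inv_inv] at this
  have hE0 : 0 < Real.exp (-(h t ^ 2)) := Real.exp_pos _
  have hE1 : Real.exp (-(h t ^ 2)) ≤ 1 := Real.exp_le_one_iff.mpr (by nlinarith [sq_nonneg (h t)])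
  rw [hR b t] at hRt
  rcases eq_or_ne (f t) 0 with hft | hft
  · rw [hft] at hRt
    norm_num at hRt
    nlinarith
  · have e3 : A t / f t = ((p:ℝ) - 1) * h1 t * f1 t / (h t * f t) := div_div _ _ _
    rw [← e3] at hRt
    have hx2 : 0 < f t ^ 2 := by positivity
    have hfM := abs_le.mp (hMf t htT)
    clear hM1 hM2 hM3 hcf hcf1 hch hch1 hcA
    have hf1M := abs_le.mp (hMf1 t htT)
    have hAM := abs_le.mp (hMA t htT)
    have hfsq : f t ^ 2 ≤ M ^ 2 := sq_le_sq' hfM.1 hfM.2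
    have hf1sq : f1 t ^ 2 ≤ M ^ 2 := sq_le_sq' hf1M.1 hf1M.2
    have hAx : A t * f t ≤ M ^ 2 := by
      calc A t * f t ≤ |A t * f t| := le_abs_self _
        _ = |A t| * |f t| := abs_mul _ _
        _ ≤ M * M := mul_le_mul (hMA t htT) (hMf t htT) (abs_nonneg _) (by linarith)
        _ = M ^ 2 := (sq M).symm
    have hq2 : (1:ℝ) ≤ (q:ℝ) - 2 := by
      have : (3:ℝ) ≤ (q:ℝ) := by exact_mod_cast hq
      linarith
    have key : 0 < (-C * Real.exp (-(h t ^ 2))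
        + ((q:ℝ) - 2) * ((b ^ 2)⁻¹ - f1 t ^ 2) / f t ^ 2
        - ((p:ℝ) - 1) * h1 t * f1 t / (h t * f t)) * f t ^ 2 := by
      rw [← e3]
      have expand : (-C * Real.exp (-(h t ^ 2))
          + ((q:ℝ) - 2) * ((b ^ 2)⁻¹ - f1 t ^ 2) / f t ^ 2
          - A t / f t) * f t ^ 2
          = -C * Real.exp (-(h t ^ 2)) * f t ^ 2
            + ((q:ℝ) - 2) * ((b ^ 2)⁻¹ - f1 t ^ 2) - A t * f t := by
        field_simp
      rw [expand]
      have hCE : C * Real.exp (-(h t ^ 2)) * f t ^ 2 ≤ C * M ^ 2 := by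
        rw [mul_assoc]
        exact mul_le_mul_of_nonneg_left
          (le_trans (mul_le_of_le_one_left hx2.le hE1) hfsq) hC.le
      have hbB' : (2 + C) * M ^ 2 + 1 < (b ^ 2)⁻¹ := by rw [hB] at hbB; exact hbB
      have hcore : (1 + C) * M ^ 2 + 1 ≤ (b ^ 2)⁻¹ - f1 t ^ 2 := by linarith
      have hXpos : (0:ℝ) ≤ (1 + C) * M ^ 2 + 1 := by positivity
      have hmain : 1 * ((1 + C) * M ^ 2 + 1) ≤ ((q:ℝ) - 2) * ((b ^ 2)⁻¹ - f1 t ^ 2) :=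
        mul_le_mul hq2 hcore hXpos (by linarith)
      linarith
    rw [← e3] at key
    rw [hRt, zero_mul] at key
    exact lt_irrefl _ key
end
end
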